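/- arXiv:2303.11719 — 12 statements merged into one kernel-verified Lean document; each statement's English description precedes it below -/
import Mathlib

section
/- Every tournament on 2k+1 vertices is k-arc-strong if and only if it is eulerian (i.e., every vertex has in-degree equal to out-degree). -/
/-- `D` is a tournament: an orientation of a complete graph. -/
def IsTournament {V : Type*} (D : V → V → Prop) : Prop :=
  (∀ v, ¬ D v v) ∧ ∀ u v : V, u ≠ v → (D u v ↔ ¬ D v u)

/-- Number of arcs of `D` leaving the set `S`. -/
noncomputable def outCut {V : Type*} (D : V → V → Prop) (S : Set V) : ℕ :=
  {p : V × V | p.1 ∈ S ∧ p.2 ∉ S ∧ D p.1 p.2}.ncard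

/-- `D` is `k`-arc-strong: every nonempty proper vertex subset has at least `k` out-going arcs. -/
def kArcStrong {V : Type*} (D : V → V → Prop) (k : ℕ) : Prop :=
  ∀ S : Set V, S.Nonempty → S ≠ Set.univ → k ≤ outCut D S

/-- Out-degree of a vertex. -/
noncomputable def outDeg {V : Type*} (D : V → V → Prop) (v : V) : ℕ := {w | D v w}.ncard

/-- In-degree of a vertex. -/
noncomputable def inDeg {V : Type*} (D : V → V → Prop) (v : V) : ℕ := {w | D w v}.ncard

/-!
Summing out-degrees and in-degrees over a vertex set `S` counts the arcs inside `S` once each,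
plus the arcs leaving `S`, respectively the arcs entering `S`; so in an eulerian digraph as many
arcs leave `S` as enter it. In a tournament these two numbers add up to `|S| · |Sᶜ|`, hence each
is `|S| · |Sᶜ| / 2 ≥ (|S| + |Sᶜ| - 1) / 2 = k`. Conversely, `k`-arc-strength applied to `{v}` and
to `{v}ᶜ` gives out- and in-degree at least `k`, and they add up to `2k`.
-/

open Finset

lemma kArcStrong_iff_forall_finset {V : Type*} [Fintype V] [DecidableEq V] {D : V → V → Prop}
    {k : ℕ} :
    kArcStrong D k ↔ ∀ s : Finset V, s.Nonempty → sᶜ.Nonempty → k ≤ outCut D s := by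
  have hne (s : Finset V) : (s : Set V) ≠ Set.univ ↔ sᶜ.Nonempty := by
    rw [← Set.nonempty_compl, ← coe_compl, coe_nonempty]
  refine ⟨fun h s hs hs' => h s (coe_nonempty.2 hs) ((hne s).2 hs'), fun h S hS hS' => ?_⟩
  lift S to Finset V using S.toFinite
  exact h S (coe_nonempty.1 hS) ((hne S).1 hS')

section Digraph

variable {V : Type*} [Fintype V] {D : V → V → Prop} [DecidableRel D]

lemma outDeg_eq_sum (v : V) : outDeg D v = ∑ b, if D v b then 1 else 0 := by
  rw [outDeg, ← card_filter, ← Set.ncard_coe_finset]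
  simp

lemma inDeg_eq_sum (v : V) : inDeg D v = ∑ a, if D a v then 1 else 0 := by
  rw [inDeg, ← card_filter, ← Set.ncard_coe_finset]
  simp

variable [DecidableEq V]

lemma outCut_coe_finset (s : Finset V) :
    outCut D s = ∑ a ∈ s, ∑ b ∈ sᶜ, if D a b then 1 else 0 := by
  rw [outCut, ← sum_product' s sᶜ (fun a b => if D a b then 1 else 0),
    ← card_filter, ← Set.ncard_coe_finset]
  congr 1
  ext
  simp [and_assoc]

lemma sum_outDeg (s : Finset V) :
    ∑ v ∈ s, outDeg D v = ∑ a ∈ s, ∑ b ∈ s, (if D a b then 1 else 0) + outCut D s := by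
  simp only [outDeg_eq_sum, outCut_coe_finset, ← sum_add_distrib, sum_add_sum_compl]

lemma sum_inDeg (s : Finset V) :
    ∑ v ∈ s, inDeg D v = ∑ a ∈ s, ∑ b ∈ s, (if D a b then 1 else 0) + outCut D ↑sᶜ := by
  rw [outCut_coe_finset, compl_compl, sum_comm (s := sᶜ), sum_comm (s := s), ← sum_add_distrib]
  simp only [inDeg_eq_sum, sum_add_sum_compl]

lemma outCut_compl_eq_outCut (hE : ∀ v, outDeg D v = inDeg D v) (s : Finset V) :
    outCut D ↑sᶜ = outCut D s := by
  have h := sum_inDeg (D := D) s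
  rw [← sum_congr rfl fun v _ => hE v, sum_outDeg] at h
  omega

end Digraph

namespace IsTournament

variable {V : Type*} {D : V → V → Prop} [DecidableRel D]

lemma ite_add_ite_eq_one (hD : IsTournament D) {a b : V} (hab : a ≠ b) :
    ((if D a b then 1 else 0) + if D b a then 1 else 0) = 1 := by
  by_cases h : D a b
  · simp [h, (hD.2 a b hab).mp h]
  · simp [h, (hD.2 b a hab.symm).mpr h]

variable [Fintype V] [DecidableEq V]

lemma outCut_add_outCut_compl (hD : IsTournament D) (s : Finset V) :
    outCut D s + outCut D ↑sᶜ = #s * #sᶜ := by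
  rw [outCut_coe_finset, outCut_coe_finset, compl_compl, sum_comm (s := sᶜ), ← sum_add_distrib,
    ← smul_eq_mul, ← sum_const]
  refine sum_congr rfl fun a ha => ?_
  rw [← sum_add_distrib, card_eq_sum_ones]
  exact sum_congr rfl fun b hb => hD.ite_add_ite_eq_one (ne_of_mem_of_not_mem ha (mem_compl.1 hb))

lemma outCut_singleton (hD : IsTournament D) (v : V) :
    outCut D ↑({v} : Finset V) = outDeg D v := by
  rw [outCut_coe_finset, sum_singleton, outDeg_eq_sum, ← sum_add_sum_compl {v}, sum_singleton,
    if_neg (hD.1 v), zero_add]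

lemma outCut_compl_singleton (hD : IsTournament D) (v : V) :
    outCut D ↑({v}ᶜ : Finset V) = inDeg D v := by
  rw [outCut_coe_finset, compl_compl, sum_comm, sum_singleton, inDeg_eq_sum,
    ← sum_add_sum_compl {v}, sum_singleton, if_neg (hD.1 v), zero_add]

lemma outDeg_add_inDeg (hD : IsTournament D) (v : V) :
    outDeg D v + inDeg D v + 1 = Fintype.card V := by
  have h := hD.outCut_add_outCut_compl {v}
  rw [hD.outCut_singleton, hD.outCut_compl_singleton, card_singleton, one_mul] at h
  rw [h, ← card_compl_add_card {v}, card_singleton]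

lemma two_mul_outCut_of_eulerian (hD : IsTournament D) (hE : ∀ v, outDeg D v = inDeg D v)
    (s : Finset V) : 2 * outCut D s = #s * #sᶜ := by
  rw [← hD.outCut_add_outCut_compl, outCut_compl_eq_outCut hE, two_mul]

end IsTournament

/-- A tournament on `2k+1` vertices is `k`-arc-strong iff it is eulerian. -/
theorem stmt_0 (k : ℕ) (hk : 0 < k) (T : Fin (2 * k + 1) → Fin (2 * k + 1) → Prop)
    (hT : IsTournament T) :
    kArcStrong T k ↔ ∀ v, outDeg T v = inDeg T v := by
  classical
  rw [kArcStrong_iff_forall_finset]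
  constructor
  · intro hstrong v
    have hcompl : ({v}ᶜ : Finset (Fin (2 * k + 1))).Nonempty := by
      rw [← card_pos, card_compl, card_singleton, Fintype.card_fin]; omega
    have hout := hT.outCut_singleton v ▸ hstrong {v} (singleton_nonempty v) hcompl
    have hin := hT.outCut_compl_singleton v ▸ hstrong {v}ᶜ hcompl (by simp)
    have hdeg := hT.outDeg_add_inDeg v
    rw [Fintype.card_fin] at hdeg
    omega
  · intro hE s hs hs'
    have hcut := hT.two_mul_outCut_of_eulerian hE s
    have hcard := card_add_card_compl s
    rw [Fintype.card_fin] at hcard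
    rw [← card_pos] at hs hs'
    nlinarith
end

section
/- Let D be a digraph, let S be a set of vertices such that for every pair of distinct vertices u,v in S and every set X of at most k-1 vertices disjoint from {u,v}, D-X contains a directed path from u to v (S is k-strong in D). If a vertex v not in S has at least k in-neighbours in S and at least k out-neighbours in S, then S ∪ {v} is k-strong in D. -/
/-!
Since `|X| < k`, some in-neighbour `a ∈ S` and some out-neighbour `b ∈ S` of `v` survive the
deletion of `X`; a path into `v` runs through `a`, a path out of `v` through `b`, and the
`k`-strength of `S` supplies the rest.
-/

/-- `S` is `k`-strong in the digraph `D`: for all distinct `u, v ∈ S` and every set `X` of at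
most `k-1` vertices disjoint from `{u, v}`, `D - X` contains a directed path from `u` to `v`. -/
def kStrongIn {V : Type*} (D : V → V → Prop) (k : ℕ) (S : Set V) : Prop :=
  ∀ u ∈ S, ∀ v ∈ S, u ≠ v → ∀ X : Set V, X.ncard ≤ k - 1 → u ∉ X → v ∉ X →
    Relation.ReflTransGen (fun a b => D a b ∧ a ∉ X ∧ b ∉ X) u v

theorem kStrongIn.reflTransGen {V : Type*} {D : V → V → Prop} {k : ℕ} {S : Set V}
    (hS : kStrongIn D k S) {u w : V} (hu : u ∈ S) (hw : w ∈ S) {X : Set V}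
    (hX : X.ncard ≤ k - 1) (huX : u ∉ X) (hwX : w ∉ X) :
    Relation.ReflTransGen (fun a b => D a b ∧ a ∉ X ∧ b ∉ X) u w := by
  rcases eq_or_ne u w with rfl | huw
  · exact .refl
  · exact hS u hu w hw huw X hX huX hwX

theorem stmt_1_general {V : Type*} [Fintype V] (D : V → V → Prop) (k : ℕ) (hk : 0 < k)
    (S : Set V) (hS : kStrongIn D k S) (v : V)
    (hin : k ≤ {w | w ∈ S ∧ D w v}.ncard) (hout : k ≤ {w | w ∈ S ∧ D v w}.ncard) :
    kStrongIn D k (S ∪ {v}) := by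
  intro u hu w hw huw X hX huX hwX
  have hXk : X.ncard < k := by omega
  obtain ⟨a, ⟨haS, hav⟩, haX⟩ := Set.exists_mem_notMem_of_ncard_lt_ncard (hXk.trans_le hin)
  obtain ⟨b, ⟨hbS, hvb⟩, hbX⟩ := Set.exists_mem_notMem_of_ncard_lt_ncard (hXk.trans_le hout)
  rcases hu with hu | rfl <;> rcases hw with hw | rfl
  · exact hS u hu w hw huw X hX huX hwX
  · exact (hS.reflTransGen hu haS hX huX haX).tail ⟨hav, haX, hwX⟩
  · exact (Relation.ReflTransGen.single ⟨hvb, huX, hbX⟩).trans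
      (hS.reflTransGen hbS hw hX hbX hwX)
  · exact absurd rfl huw

/-- If `S` is `k`-strong in `D` and `v ∉ S` has at least `k` in-neighbours and at least `k`
out-neighbours in `S`, then `S ∪ {v}` is `k`-strong in `D`. -/
theorem stmt_1 {V : Type*} [Fintype V] (D : V → V → Prop) (k : ℕ) (hk : 0 < k)
    (S : Set V) (hS : kStrongIn D k S) (v : V) (hv : v ∉ S)
    (hin : k ≤ {w | w ∈ S ∧ D w v}.ncard) (hout : k ≤ {w | w ∈ S ∧ D v w}.ncard) :
    kStrongIn D k (S ∪ {v}) :=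
  stmt_1_general D k hk S hS v hin hout
end

section
/- Let n ≥ k+1 be positive integers and let G be an n-vertex multigraph. If for every edge uv of G there exists a set F of at most k edges such that every path from u to v in G uses an edge of F, then G has at most k(n-1) edges. -/
/-!
Induct on vertex sets `S`, bounding the number of edges with both ends in `S` by `k (|S| - 1)`.
Given an edge `uv` inside `S` with a cut `F` of size at most `k`, split `S` into the part `A`
reachable from `u` without using `F` and the rest `S \ A`; both are nonempty (`u ∈ A`, `v ∉ A`).
An edge outside `F` cannot join `A` to its complement, so every edge inside `S` lies inside `A`,
inside `S \ A`, or in `F`, giving `k (|A| - 1) + k (|S \ A| - 1) + k = k (|S| - 1)`.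
-/

namespace Multigraph

open Finset

variable {V E : Type*}

def AdjAvoiding (ends : E → Sym2 V) (F : Finset E) (a b : V) : Prop :=
  ∃ f : E, f ∉ F ∧ ends f = s(a, b)

theorem adjAvoiding_closed {ends : E → Sym2 V} {F : Finset E} {P : V → Prop}
    (hP : ∀ a b, P a → AdjAvoiding ends F a b → P b) :
    ∀ f ∉ F, ∀ a ∈ ends f, ∀ b ∈ ends f, P a → P b := by
  intro f hf a ha b hb hPa
  rcases eq_or_ne a b with rfl | hab
  · exact hPa
  · exact hP a b hPa ⟨f, hf, ((Sym2.mem_and_mem_iff hab).1 ⟨ha, hb⟩)⟩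

variable [Fintype E] [DecidableEq V]

def edgesWithin (ends : E → Sym2 V) (S : Finset V) : Finset E :=
  univ.filter fun e => ends e ∈ S.sym2

variable {ends : E → Sym2 V}

theorem mem_edgesWithin {S : Finset V} {e : E} :
    e ∈ edgesWithin ends S ↔ ∀ x ∈ ends e, x ∈ S := by
  simp [edgesWithin, mem_sym2_iff]

theorem edgesWithin_subset_union [DecidableEq E] {S : Finset V} {F : Finset E} {P : V → Prop}
    [DecidablePred P] (hP : ∀ a b, P a → AdjAvoiding ends F a b → P b) :
    edgesWithin ends S ⊆
      edgesWithin ends (S.filter P) ∪ edgesWithin ends (S.filter (¬ P ·)) ∪ F := by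
  intro f hf
  rw [mem_edgesWithin] at hf
  by_cases hfF : f ∈ F
  · exact mem_union_right _ hfF
  refine mem_union_left _ ?_
  by_cases hmeets : ∃ a ∈ ends f, P a
  · obtain ⟨a, haf, ha⟩ := hmeets
    exact mem_union_left _ <| mem_edgesWithin.2 fun b hbf =>
      mem_filter.2 ⟨hf b hbf, adjAvoiding_closed hP f hfF a haf b hbf ha⟩
  · push Not at hmeets
    exact mem_union_right _ <| mem_edgesWithin.2 fun b hbf => mem_filter.2 ⟨hf b hbf, hmeets b hbf⟩

theorem card_edgesWithin_le {k : ℕ}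
    (hcut : ∀ (e : E) (u v : V), ends e = s(u, v) →
      ∃ F : Finset E, F.card ≤ k ∧ ¬ Relation.ReflTransGen (AdjAvoiding ends F) u v)
    (S : Finset V) : #(edgesWithin ends S) ≤ k * (#S - 1) := by
  classical
  induction S using Finset.strongInduction with
  | H S ih =>
  rcases (edgesWithin ends S).eq_empty_or_nonempty with hempty | ⟨e, he⟩
  · simp [hempty]
  · obtain ⟨u, v, huv⟩ : ∃ u v, ends e = s(u, v) := Sym2.exists.1 ⟨ends e, rfl⟩
    obtain ⟨F, hFk, huv_cut⟩ := hcut e u v huv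
    rw [mem_edgesWithin, huv] at he
    set P := Relation.ReflTransGen (AdjAvoiding ends F) u
    have hP : ∀ a b, P a → AdjAvoiding ends F a b → P b := fun _ _ => .tail
    have huS : u ∈ S := he u (Sym2.mem_mk_left u v)
    have hvS : v ∈ S := he v (Sym2.mem_mk_right u v)
    calc #(edgesWithin ends S)
        ≤ #(edgesWithin ends (S.filter P)) + #(edgesWithin ends (S.filter (¬ P ·))) + #F :=
          (card_le_card (edgesWithin_subset_union hP)).trans
            ((card_union_le _ _).trans (Nat.add_le_add_right (card_union_le _ _) _))
      _ ≤ k * (#(S.filter P) - 1) + k * (#(S.filter (¬ P ·)) - 1) + k := by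
          gcongr
          · exact ih _ (filter_ssubset.2 ⟨v, hvS, huv_cut⟩)
          · exact ih _ (filter_ssubset.2 ⟨u, huS, not_not.2 .refl⟩)
      _ = k * (#S - 1) := by
          obtain ⟨a, ha⟩ : ∃ a, #(S.filter P) = a + 1 :=
            Nat.exists_eq_add_one.2 (card_pos.2 ⟨u, mem_filter.2 ⟨huS, .refl⟩⟩)
          obtain ⟨b, hb⟩ : ∃ b, #(S.filter (¬ P ·)) = b + 1 :=
            Nat.exists_eq_add_one.2 (card_pos.2 ⟨v, mem_filter.2 ⟨hvS, huv_cut⟩⟩)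
          rw [← card_filter_add_card_filter_not (s := S) P, ha, hb,
            show a + 1 + (b + 1) - 1 = a + b + 1 by omega]
          simp only [Nat.add_sub_cancel]
          ring

end Multigraph

theorem stmt_3_general (n k : ℕ)
    (V : Type*) [Fintype V] (hV : Fintype.card V = n)
    (E : Type*) [Fintype E] (ends : E → Sym2 V)
    (hcut : ∀ (e : E) (u v : V), ends e = s(u, v) →
      ∃ F : Finset E, F.card ≤ k ∧
        ¬ Relation.ReflTransGen (fun a b => ∃ f : E, f ∉ F ∧ ends f = s(a, b)) u v) :
    Fintype.card E ≤ k * (n - 1) := by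
  classical
  simpa [Multigraph.edgesWithin, hV] using Multigraph.card_edgesWithin_le hcut Finset.univ

/-- Let `G` be a multigraph on `n ≥ k+1` vertices (vertex type `V`, edge-index type `E` with
endpoint map `ends` and no loops). If for every edge `e` with endpoints `u, v` there is a set
`F` of at most `k` edges such that every `u`-`v` path uses an edge of `F` (i.e. `u` cannot
reach `v` avoiding `F`), then `G` has at most `k(n-1)` edges. -/
theorem stmt_3 (n k : ℕ) (hk : 0 < k) (hn : k + 1 ≤ n)
    (V : Type*) [Fintype V] (hV : Fintype.card V = n)
    (E : Type*) [Fintype E] (ends : E → Sym2 V) (hloop : ∀ e, ¬ (ends e).IsDiag)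
    (hcut : ∀ (e : E) (u v : V), ends e = s(u, v) →
      ∃ F : Finset E, F.card ≤ k ∧
        ¬ Relation.ReflTransGen (fun a b => ∃ f : E, f ∉ F ∧ ends f = s(a, b)) u v) :
    Fintype.card E ≤ k * (n - 1) :=
  stmt_3_general n k V hV E ends hcut
end

section
/- For every positive integer t, there exists a 2-edge-connected digraph D on 2^{t-1}+1+C(2^{t-1}+1, 2) vertices with a specified vertex s such that every digraph obtained from D by at most t-1 inversions contains a sink or a source distinct from s. -/
/-- Inversion of the vertex set `X` in the digraph `D`: all arcs with both endpoints
in `X` are reversed. -/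
def dinv {V : Type*} (D : V → V → Prop) (X : Set V) : V → V → Prop :=
  fun u v => (u ∈ X ∧ v ∈ X ∧ D v u) ∨ (¬ (u ∈ X ∧ v ∈ X) ∧ D u v)

/-- Successive inversions of a list of vertex sets. -/
def dinvFam {V : Type*} (D : V → V → Prop) (Xs : List (Set V)) : V → V → Prop :=
  Xs.foldl dinv D

/-- The underlying multigraph of the digraph `D` is `m`-edge-connected: every nonempty proper
vertex subset is incident to at least `m` crossing arcs (in either direction). -/
def edgeConn {V : Type*} (D : V → V → Prop) (m : ℕ) : Prop :=
  ∀ S : Set V, S.Nonempty → S ≠ Set.univ →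
    m ≤ outCut D S + outCut (fun a b => D b a) S


/-!
Take a transitive tournament on `k = 2^(t-1) + 1` vertices and, for every pair `{u, v}` of them,
add a new vertex receiving an arc from `u` and from `v`. Every cut of this digraph meets a
triangle in two arcs, so it is 2-edge-connected. Given at most `t - 1` inversions, the pigeonhole
principle yields two tournament vertices `u ≠ v` lying in exactly the same inverted sets. Each
inversion then either reverses both arcs at the pair vertex of `{u, v}` or neither of them, so
that vertex remains a sink or a source.
-/

section Inversion

variable {V : Type*} {E : V → V → Prop} {X : Set V} {a b : V}

lemma dinv_iff_of_mem (ha : a ∈ X) (hb : b ∈ X) : dinv E X a b ↔ E b a := by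
  simp [dinv, ha, hb]

lemma dinv_iff_of_not_and (h : ¬(a ∈ X ∧ b ∈ X)) : dinv E X a b ↔ E a b := by
  unfold dinv
  tauto

lemma dinv_or_dinv_iff : dinv E X a b ∨ dinv E X b a ↔ E a b ∨ E b a := by
  unfold dinv
  tauto

def IsSinkOrSource (E : V → V → Prop) (m : V) : Prop :=
  (∀ w, ¬ E m w) ∨ (∀ w, ¬ E w m)

variable {m : V} {N : Set V}

lemma isSinkOrSource_dinv (hN : ∀ w, E m w ∨ E w m → w ∈ N) (hX : N ⊆ X ∨ Disjoint N X)
    (h : IsSinkOrSource E m) : IsSinkOrSource (dinv E X) m := by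
  have hfar : ∀ w, w ∉ N → ¬ E m w ∧ ¬ E w m := fun w hw => not_or.mp (mt (hN w) hw)
  by_cases hreversed : m ∈ X ∧ N ⊆ X
  · have key : ∀ w, (dinv E X m w ↔ E w m) ∧ (dinv E X w m ↔ E m w) := fun w => by
      by_cases hw : w ∈ X
      · exact ⟨dinv_iff_of_mem hreversed.1 hw, dinv_iff_of_mem hw hreversed.1⟩
      · simp [dinv_iff_of_not_and (a := m) (by tauto), dinv_iff_of_not_and (b := m) (by tauto),
          hfar w (fun h => hw (hreversed.2 h))]
    simp only [IsSinkOrSource, key] at h ⊢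
    exact h.symm
  · have key : ∀ w, (dinv E X m w ↔ E m w) ∧ (dinv E X w m ↔ E w m) := fun w => by
      by_cases hmw : m ∈ X ∧ w ∈ X
      · have hNX : Disjoint N X := hX.resolve_left fun hNX => hreversed ⟨hmw.1, hNX⟩
        simp [dinv_iff_of_mem (E := E) hmw.1 hmw.2, dinv_iff_of_mem (E := E) hmw.2 hmw.1,
          hfar w (fun h => Set.disjoint_left.mp hNX h hmw.2)]
      · exact ⟨dinv_iff_of_not_and hmw, dinv_iff_of_not_and (by tauto)⟩
    simpa only [IsSinkOrSource, key] using h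

lemma isSinkOrSource_dinvFam {Xs : List (Set V)} (hN : ∀ w, E m w ∨ E w m → w ∈ N)
    (hXs : ∀ X ∈ Xs, N ⊆ X ∨ Disjoint N X) (h : IsSinkOrSource E m) :
    IsSinkOrSource (dinvFam E Xs) m := by
  induction Xs generalizing E with
  | nil => exact h
  | cons X Xs ih =>
    exact ih (fun w hw => hN w (dinv_or_dinv_iff.mp hw))
      (fun Y hY => hXs Y (List.mem_cons_of_mem _ hY))
      (isSinkOrSource_dinv hN (hXs X List.mem_cons_self) h)

lemma exists_ne_forall_mem_iff_mem {β : Type*} [Fintype β] (f : β → V) (Xs : List (Set V))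
    (h : 2 ^ Xs.length < Fintype.card β) :
    ∃ u v, u ≠ v ∧ ∀ X ∈ Xs, (f u ∈ X ↔ f v ∈ X) := by
  classical
  obtain ⟨u, v, huv, hpattern⟩ := Fintype.exists_ne_map_eq_of_card_lt
    (fun u (i : Fin Xs.length) => decide (f u ∈ Xs[i])) (by simpa using h)
  refine ⟨u, v, huv, fun X hX => ?_⟩
  obtain ⟨i, hi, rfl⟩ := List.mem_iff_getElem.mp hX
  simpa using congrFun hpattern ⟨i, hi⟩

end Inversion

section EdgeConnectivity

variable {V W : Type*}

lemma outCut_comap (e : V ≃ W) (D : W → W → Prop) (T : Set W) :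
    outCut (fun a b => D (e a) (e b)) (e ⁻¹' T) = outCut D T := by
  unfold outCut
  rw [← Set.ncard_preimage_of_injective_subset_range (f := Prod.map e e)
    (e.injective.prodMap e.injective) (by simp [(e.surjective.prodMap e.surjective).range_eq])]
  rfl

lemma edgeConn_comap (e : V ≃ W) {D : W → W → Prop} {m : ℕ} (h : edgeConn D m) :
    edgeConn (fun a b => D (e a) (e b)) m := by
  intro S hS hSu
  rw [← e.preimage_symm_preimage S]
  refine (outCut_comap e D _).symm ▸ (outCut_comap e (fun a b => D b a) _).symm ▸
    h (e.symm ⁻¹' S) ?_ ?_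
  · simpa [← e.image_eq_preimage_symm] using hS.image e
  · exact fun h' => hSu (by rw [← e.preimage_symm_preimage S, h', Set.preimage_univ])

lemma two_le_ncard_add_ncard [Finite V] {A B : Set V} {a b : V}
    (ha : a ∈ A ∪ B) (hb : b ∈ A ∪ B) (hab : a ≠ b) : 2 ≤ A.ncard + B.ncard := by
  calc 2 = ({a, b} : Set V).ncard := (Set.ncard_pair hab).symm
    _ ≤ (A ∪ B).ncard := Set.ncard_le_ncard (Set.pair_subset ha hb)
    _ ≤ A.ncard + B.ncard := Set.ncard_union_le A B

lemma two_le_outCut_add_of_triangle [Finite V] {D : V → V → Prop} {S : Set V} {a b c : V}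
    (hab : a ≠ b) (hbc : b ≠ c) (hDab : D a b ∨ D b a) (hDac : D a c ∨ D c a)
    (hDbc : D b c ∨ D c b) (ha : a ∈ S) (hc : c ∉ S) :
    2 ≤ outCut D S + outCut (fun x y => D y x) S := by
  unfold outCut
  by_cases hb : b ∈ S
  · refine two_le_ncard_add_ncard (a := (a, c)) (b := (b, c)) ?_ ?_ (by simp [hab])
    · exact hDac.imp (⟨ha, hc, ·⟩) (⟨ha, hc, ·⟩)
    · exact hDbc.imp (⟨hb, hc, ·⟩) (⟨hb, hc, ·⟩)
  · refine two_le_ncard_add_ncard (a := (a, b)) (b := (a, c)) ?_ ?_ (by simp [hbc])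
    · exact hDab.imp (⟨ha, hb, ·⟩) (⟨ha, hb, ·⟩)
    · exact hDac.imp (⟨ha, hc, ·⟩) (⟨ha, hc, ·⟩)

end EdgeConnectivity

section PairDigraph

abbrev PairVertex (α : Type*) := α ⊕ {p : Finset α // p.card = 2}

variable {α : Type*} [LinearOrder α]

def pairDigraph : PairVertex α → PairVertex α → Prop
  | .inl i, .inl j => i < j
  | .inl i, .inr p => i ∈ p.1
  | .inr _, _ => False

lemma pairDigraph_irrefl (x : PairVertex α) : ¬ pairDigraph x x := by
  cases x with
  | inl i => exact lt_irrefl i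
  | inr p => exact id

lemma pairDigraph_inl_adj {i j : α} (hij : i ≠ j) :
    pairDigraph (.inl i) (.inl j) ∨ pairDigraph (.inl j) (.inl i) :=
  lt_or_gt_of_ne hij

lemma pairDigraph_inl_inr_adj {i : α} {p : {p : Finset α // p.card = 2}} (hi : i ∈ p.1) :
    pairDigraph (.inl i) (.inr p) ∨ pairDigraph (.inr p) (.inl i) :=
  .inl hi

lemma pairDigraph_inr_adj_iff {p : {p : Finset α // p.card = 2}} {w : PairVertex α} :
    pairDigraph (.inr p) w ∨ pairDigraph w (.inr p) ↔ ∃ i ∈ p.1, w = .inl i := by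
  cases w with
  | inl i => simp [pairDigraph]
  | inr q => simp [pairDigraph]

lemma edgeConn_pairDigraph [Finite α] : edgeConn (pairDigraph (α := α)) 2 := by
  intro S hS hSu
  by_cases hsplit : ∃ i j, .inl i ∈ S ∧ .inl j ∉ S
  · obtain ⟨i, j, hi, hj⟩ := hsplit
    have hij : i ≠ j := by rintro rfl; exact hj hi
    exact two_le_outCut_add_of_triangle (b := .inr ⟨{i, j}, Finset.card_pair hij⟩)
      (by simp) (by simp) (pairDigraph_inl_inr_adj (by simp)) (pairDigraph_inl_adj hij)
      (pairDigraph_inl_inr_adj (i := j) (by simp)).symm hi hj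
  push Not at hsplit
  by_cases hin : ∃ i, .inl i ∈ S
  · obtain ⟨x, hx⟩ := (Set.ne_univ_iff_exists_notMem S).mp hSu
    obtain ⟨i₀, hi₀⟩ := hin
    rcases x with j | p
    · exact absurd (hsplit i₀ j hi₀) hx
    · obtain ⟨i, j, hij, hp⟩ := Finset.card_eq_two.mp p.2
      exact two_le_outCut_add_of_triangle (a := .inl i) (b := .inl j) (by simpa) (by simp)
        (pairDigraph_inl_adj hij) (pairDigraph_inl_inr_adj (by simp [hp]))
        (pairDigraph_inl_inr_adj (by simp [hp])) (hsplit i₀ i hi₀) hx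
  · push Not at hin
    obtain ⟨x, hx⟩ := hS
    rcases x with j | p
    · exact absurd hx (hin j)
    · obtain ⟨i, j, hij, hp⟩ := Finset.card_eq_two.mp p.2
      exact two_le_outCut_add_of_triangle (b := .inl i) (c := .inl j) (by simp) (by simpa)
        (pairDigraph_inl_inr_adj (by simp [hp])).symm
        (pairDigraph_inl_inr_adj (by simp [hp])).symm
        (pairDigraph_inl_adj hij) hx (hin j)

end PairDigraph

theorem stmt_5_general (t : ℕ) :
    ∃ D : Fin (2 ^ (t - 1) + 1 + Nat.choose (2 ^ (t - 1) + 1) 2) →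
        Fin (2 ^ (t - 1) + 1 + Nat.choose (2 ^ (t - 1) + 1) 2) → Prop,
      (∀ v, ¬ D v v) ∧ edgeConn D 2 ∧
      ∃ s, ∀ Xs : List (Set (Fin (2 ^ (t - 1) + 1 + Nat.choose (2 ^ (t - 1) + 1) 2))),
        Xs.length ≤ t - 1 →
        ∃ v, v ≠ s ∧
          ((∀ w, ¬ dinvFam D Xs v w) ∨ (∀ w, ¬ dinvFam D Xs w v)) := by
  set k := 2 ^ (t - 1) + 1
  obtain e : Fin (k + k.choose 2) ≃ PairVertex (Fin k) :=
    Fintype.equivOfCardEq (by simp [Fintype.card_finset_len])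
  refine ⟨fun a b => pairDigraph (e a) (e b), fun v => pairDigraph_irrefl (e v),
    edgeConn_comap e edgeConn_pairDigraph, e.symm (.inl ⟨0, Nat.succ_pos _⟩),
    fun Xs hXs => ?_⟩
  obtain ⟨u, v, huv, hmem⟩ := exists_ne_forall_mem_iff_mem (fun i => e.symm (.inl i)) Xs
    (by simpa [k] using (Nat.pow_le_pow_right two_pos hXs).trans_lt (Nat.lt_succ_self _))
  set m := e.symm (.inr ⟨{u, v}, Finset.card_pair huv⟩)
  refine ⟨m, by simp [m], isSinkOrSource_dinvFam (N := {e.symm (.inl u), e.symm (.inl v)})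
    ?_ ?_ (.inl fun w => by simp [m, pairDigraph])⟩
  · intro w hw
    obtain ⟨i, hi, hwi⟩ := pairDigraph_inr_adj_iff.mp (by simpa [m] using hw)
    rw [← e.symm_apply_apply w, hwi]
    simpa using hi
  · intro X hX
    by_cases hu : e.symm (.inl u) ∈ X
    · exact .inl (Set.pair_subset hu ((hmem X hX).mp hu))
    · exact .inr (Set.disjoint_left.mpr (by rintro _ (rfl | rfl) <;> simp_all))

/-- For every positive integer `t`, there exists a 2-edge-connected digraph `D` on
`2^(t-1) + 1 + C(2^(t-1)+1, 2)` vertices with a specified vertex `s` such that every digraph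
obtained from `D` by at most `t-1` inversions contains a sink or a source distinct from `s`. -/
theorem stmt_5 (t : ℕ) (ht : 0 < t) :
    ∃ D : Fin (2 ^ (t - 1) + 1 + Nat.choose (2 ^ (t - 1) + 1) 2) →
        Fin (2 ^ (t - 1) + 1 + Nat.choose (2 ^ (t - 1) + 1) 2) → Prop,
      (∀ v, ¬ D v v) ∧ edgeConn D 2 ∧
      ∃ s, ∀ Xs : List (Set (Fin (2 ^ (t - 1) + 1 + Nat.choose (2 ^ (t - 1) + 1) 2))),
        Xs.length ≤ t - 1 →
        ∃ v, v ≠ s ∧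
          ((∀ w, ¬ dinvFam D Xs v w) ∨ (∀ w, ¬ dinvFam D Xs w v)) :=
  stmt_5_general t
end

section
/- For every integer n ≥ 3 there is a 2-edge-connected digraph D on n vertices such that every digraph obtained from D by applying at most (1/2)⌈log₂ n⌉ - 1 inversions contains a sink or a source. -/
/-
The digraph is a cycle of digons on the first `s ≈ n/2` vertices (the bases), and every other
vertex is a sink whose two in-arcs come from two distinct bases, the pairs being chosen so that any
two of the first `2^k + 1` bases share such a pendant sink whenever `2^(2k+1) < n`.
A pendant `c` attached to `u` and `v` stays a sink or a source under every inversion of a set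
containing both or neither of `u`, `v`. After `k` inversions, two of the first `2^k + 1` bases
lie in exactly the same inverted sets (pigeonhole on the `2^k` membership patterns), so
their common pendant is a sink or a source.
-/

section Inversion

variable {V : Type*}

def IsSinkOrSourceWithin (E : V → V → Prop) (c : V) (N : Set V) : Prop :=
  (∀ w, ¬E c w ∧ (E w c → w ∈ N)) ∨ (∀ w, ¬E w c ∧ (E c w → w ∈ N))

theorem IsSinkOrSourceWithin.dinv {E : V → V → Prop} {c : V} {N X : Set V}
    (h : IsSinkOrSourceWithin E c N) (hX : N ⊆ X ∨ Disjoint N X) :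
    IsSinkOrSourceWithin (dinv E X) c N := by
  unfold IsSinkOrSourceWithin _root_.dinv
  -- If `c` and all of `N` lie in `X`, every arc at `c` is reversed; otherwise none is.
  by_cases hflip : c ∈ X ∧ N ⊆ X
  · rcases h with h | h
    · exact Or.inr fun w => by have := h w; have := @hflip.2 w; tauto
    · exact Or.inl fun w => by have := h w; have := @hflip.2 w; tauto
  · have hkeep : ∀ w ∈ N, ¬(c ∈ X ∧ w ∈ X) := fun w hw ⟨hc, hwX⟩ =>
      hX.elim (fun hNX => hflip ⟨hc, hNX⟩) (fun hd => hd.notMem_of_mem_left hw hwX)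
    rcases h with h | h
    · exact Or.inl fun w => by have := h w; have := hkeep w; tauto
    · exact Or.inr fun w => by have := h w; have := hkeep w; tauto

theorem IsSinkOrSourceWithin.dinvFam {c : V} {N : Set V} (Xs : List (Set V))
    (hXs : ∀ X ∈ Xs, N ⊆ X ∨ Disjoint N X) {E : V → V → Prop}
    (h : IsSinkOrSourceWithin E c N) : IsSinkOrSourceWithin (dinvFam E Xs) c N := by
  induction Xs generalizing E with
  | nil => exact h
  | cons X Xs ih =>
    exact ih (fun Y hY => hXs Y (List.mem_cons_of_mem X hY))
      (h.dinv (hXs X List.mem_cons_self))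

theorem exists_ne_forall_mem_iff_of_two_pow_lt (Xs : List (Set V)) (B : Finset V)
    (hB : 2 ^ Xs.length < B.card) : ∃ u ∈ B, ∃ v ∈ B, u ≠ v ∧ ∀ X ∈ Xs, (u ∈ X ↔ v ∈ X) := by
  classical
  have hcard : Xs.toFinset.powerset.card < B.card := by
    rw [Finset.card_powerset]
    exact (Nat.pow_le_pow_right two_pos (List.toFinset_card_le Xs)).trans_lt hB
  obtain ⟨u, hu, v, hv, huv, hpat⟩ := Finset.exists_ne_map_eq_of_card_lt_of_maps_to hcard
    (f := fun u => Xs.toFinset.filter (u ∈ ·))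
    fun _ _ => Finset.mem_powerset.mpr (Finset.filter_subset _ _)
  refine ⟨u, hu, v, hv, huv, fun X hX => ?_⟩
  simpa [hX] using congrArg (X ∈ ·) hpat

end Inversion

section Cut

variable {V : Type*} [Finite V] {D : V → V → Prop} {S : Set V}

theorem outCut_pos {u v : V} (hu : u ∈ S) (hv : v ∉ S) (h : D u v) : 0 < outCut D S :=
  (Set.ncard_pos (Set.toFinite _)).mpr ⟨(u, v), hu, hv, h⟩

theorem two_le_outCut {p q : V × V} (hpq : p ≠ q) (hp : p.1 ∈ S ∧ p.2 ∉ S ∧ D p.1 p.2)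
    (hq : q.1 ∈ S ∧ q.2 ∉ S ∧ D q.1 q.2) : 2 ≤ outCut D S := by
  rw [← Set.ncard_pair hpq]
  exact Set.ncard_le_ncard (Set.pair_subset hp hq) (Set.toFinite _)

end Cut

theorem forall_lt_of_succ_mod_closed {s : ℕ} {P : ℕ → Prop}
    (hP : ∀ x < s, P x → P ((x + 1) % s)) {a : ℕ} (ha : a < s) (hPa : P a) {b : ℕ}
    (hb : b < s) : P b := by
  have climb : ∀ a, P a → ∀ x, a ≤ x → x < s → P x := by
    intro a hPa x hax
    induction x, hax using Nat.le_induction with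
    | base => exact fun _ => hPa
    | succ x _ ih =>
      intro hx
      simpa [Nat.mod_eq_of_lt hx] using hP x (by omega) (ih (by omega))
  have hP0 : P 0 := by
    simpa [Nat.sub_add_cancel (by omega : 1 ≤ s)] using
      hP (s - 1) (by omega) (climb a hPa (s - 1) (by omega) (by omega))
  exact climb 0 hP0 b (Nat.zero_le b) hb

theorem add_one_mod_ne_self {s u : ℕ} (hs : 2 ≤ s) (hu : u < s) : (u + 1) % s ≠ u := by
  rcases Nat.lt_or_ge (u + 1) s with h | h
  · rw [Nat.mod_eq_of_lt h]
    omega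
  · rw [show u + 1 = s by omega, Nat.mod_self]
    omega

def cycleWithPendants (s : ℕ) (e : ℕ → ℕ × ℕ) (u v : ℕ) : Prop :=
  (u < s ∧ v < s ∧ (v = (u + 1) % s ∨ u = (v + 1) % s)) ∨
    (s ≤ v ∧ (u = (e v).1 ∨ u = (e v).2))

section CycleWithPendants

variable {s n : ℕ} {e : ℕ → ℕ × ℕ}

theorem cycleWithPendants_irrefl (hs : 2 ≤ s) (he : ∀ c, (e c).1 < (e c).2 ∧ (e c).2 < s)
    (u : ℕ) : ¬cycleWithPendants s e u u := by
  have := he u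
  rintro (⟨hu, -, h | h⟩ | ⟨hu, h | h⟩)
  exacts [add_one_mod_ne_self hs hu h.symm, add_one_mod_ne_self hs hu h.symm, by omega, by omega]

theorem cycleWithPendants_not_of_le (he : ∀ c, (e c).1 < (e c).2 ∧ (e c).2 < s) {c : ℕ}
    (hc : s ≤ c) (w : ℕ) : ¬cycleWithPendants s e c w := by
  have := he w
  rintro (⟨hc', -⟩ | ⟨-, h | h⟩) <;> omega

theorem cycleWithPendants_iff_of_le {c : ℕ} (hc : s ≤ c) (w : ℕ) :
    cycleWithPendants s e w c ↔ w = (e c).1 ∨ w = (e c).2 := by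
  simp only [cycleWithPendants, hc, true_and, or_iff_right_iff_imp]
  omega

theorem two_le_outCut_cycleWithPendants_of_bases_subset
    (he : ∀ c, (e c).1 < (e c).2 ∧ (e c).2 < s) {S : Set (Fin n)}
    (hbase : ∀ x : Fin n, (x : ℕ) < s → x ∈ S) (hSu : S ≠ Set.univ) :
    2 ≤ outCut (fun u v : Fin n => cycleWithPendants s e u v) S := by
  obtain ⟨v, hv⟩ := (Set.ne_univ_iff_exists_notMem S).mp hSu
  have hvs : s ≤ v := by
    by_contra h
    exact hv (hbase v (by omega))
  have := he v
  refine two_le_outCut (p := (⟨(e v).1, by omega⟩, v)) (q := (⟨(e v).2, by omega⟩, v))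
    (by simp; omega) ⟨hbase _ (by simp; omega), hv, ?_⟩ ⟨hbase _ (by simp; omega), hv, ?_⟩ <;>
    simp [cycleWithPendants_iff_of_le hvs]

theorem two_le_outCut_flip_cycleWithPendants_of_bases_disjoint
    (he : ∀ c, (e c).1 < (e c).2 ∧ (e c).2 < s) {S : Set (Fin n)}
    (hbase : ∀ x : Fin n, (x : ℕ) < s → x ∉ S) (hS : S.Nonempty) :
    2 ≤ outCut (fun u v : Fin n => cycleWithPendants s e v u) S := by
  obtain ⟨v, hv⟩ := hS
  have hvs : s ≤ v := by
    by_contra h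
    exact hbase v (by omega) hv
  have := he v
  refine two_le_outCut (p := (v, ⟨(e v).1, by omega⟩)) (q := (v, ⟨(e v).2, by omega⟩))
    (by simp; omega) ⟨hv, hbase _ (by simp; omega), ?_⟩ ⟨hv, hbase _ (by simp; omega), ?_⟩ <;>
    simp [cycleWithPendants_iff_of_le hvs]

theorem edgeConn_cycleWithPendants (hs : 2 ≤ s) (hsn : s ≤ n)
    (he : ∀ c, (e c).1 < (e c).2 ∧ (e c).2 < s) :
    edgeConn (fun u v : Fin n => cycleWithPendants s e u v) 2 := by
  intro S hS hSu
  beta_reduce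
  by_cases hcross : ∃ x : Fin n, (x : ℕ) < s ∧ x ∈ S ∧
      ∃ y : Fin n, (y : ℕ) = (x + 1) % s ∧ y ∉ S
  · obtain ⟨x, hx, hxS, y, hy, hyS⟩ := hcross
    have hys : (y : ℕ) < s := hy ▸ Nat.mod_lt _ (by omega)
    have := outCut_pos (D := fun u v : Fin n => cycleWithPendants s e u v) hxS hyS
      (Or.inl ⟨hx, hys, Or.inl hy⟩)
    have := outCut_pos (D := fun u v : Fin n => cycleWithPendants s e v u) hxS hyS
      (Or.inl ⟨hys, hx, Or.inr hy⟩)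
    omega
  push Not at hcross
  by_cases hbase : ∃ b : Fin n, (b : ℕ) < s ∧ b ∈ S
  · obtain ⟨b, hb, hbS⟩ := hbase
    have hall : ∀ x : Fin n, (x : ℕ) < s → x ∈ S := fun x hx =>
      forall_lt_of_succ_mod_closed (P := fun y => ∀ h : y < n, (⟨y, h⟩ : Fin n) ∈ S)
        (fun y hy hPy h => hcross ⟨y, by omega⟩ hy (hPy _) ⟨_, h⟩ rfl) hb (fun _ => hbS) hx
        x.isLt
    have := two_le_outCut_cycleWithPendants_of_bases_subset he hall hSu
    omega
  · push Not at hbase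
    have := two_le_outCut_flip_cycleWithPendants_of_bases_disjoint he hbase hS
    omega

theorem sink_or_source_dinvFam_cycleWithPendants (he : ∀ c, (e c).1 < (e c).2 ∧ (e c).2 < s)
    {c u v : Fin n} (hc : s ≤ c) (hu : (u : ℕ) = (e c).1) (hv : (v : ℕ) = (e c).2)
    (Xs : List (Set (Fin n))) (hXs : ∀ X ∈ Xs, (u ∈ X ↔ v ∈ X)) :
    (∀ w, ¬dinvFam (fun u v : Fin n => cycleWithPendants s e u v) Xs c w) ∨
      (∀ w, ¬dinvFam (fun u v : Fin n => cycleWithPendants s e u v) Xs w c) := by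
  have hpendant : IsSinkOrSourceWithin (fun u v : Fin n => cycleWithPendants s e u v) c {u, v} :=
    Or.inl fun w => ⟨cycleWithPendants_not_of_le he hc w, fun h => by
      rcases (cycleWithPendants_iff_of_le hc w).1 h with h | h
      exacts [Or.inl (Fin.ext (h.trans hu.symm)), Or.inr (Fin.ext (h.trans hv.symm))]⟩
  have hsplit : ∀ X ∈ Xs, {u, v} ⊆ X ∨ Disjoint {u, v} X := fun X hX => by
    by_cases huX : u ∈ X
    · exact Or.inl (Set.pair_subset huX ((hXs X hX).1 huX))
    · exact Or.inr (Set.disjoint_left.2 fun w hw => by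
        rcases hw with rfl | rfl
        exacts [huX, fun hvX => huX ((hXs X hX).2 hvX)])
  exact (hpendant.dinvFam Xs hsplit).imp (fun h w => (h w).1) (fun h w => (h w).1)

end CycleWithPendants

/-- The vertex `s + Nat.pair i d` is attached to `i` and `i + d + 1`; indices whose ends would
not be below `s` fall back to `(0, 1)`. -/
def pendantEnds (s c : ℕ) : ℕ × ℕ :=
  match Nat.unpair (c - s) with
  | (i, d) => if i + d + 1 < s then (i, i + d + 1) else (0, 1)

theorem pendantEnds_spec {s : ℕ} (hs : 2 ≤ s) (c : ℕ) :
    (pendantEnds s c).1 < (pendantEnds s c).2 ∧ (pendantEnds s c).2 < s := by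
  unfold pendantEnds
  split
  split_ifs <;> simp <;> omega

theorem exists_pendantEnds_eq {s i j : ℕ} (hij : i < j) (hjs : j < s) :
    ∃ c, s ≤ c ∧ c < s + j ^ 2 ∧ pendantEnds s c = (i, j) := by
  refine ⟨s + Nat.pair i (j - i - 1), by omega, ?_, ?_⟩
  · have := (Nat.pair_lt_max_add_one_sq i (j - i - 1)).trans_le
      (Nat.pow_le_pow_left (show max i (j - i - 1) + 1 ≤ j by omega) 2)
    omega
  · simp [pendantEnds, show i + (j - i - 1) + 1 = j by omega, hjs]

/-- For every `n ≥ 3` there is a 2-edge-connected digraph `D` on `n` vertices such that every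
digraph obtained from `D` by at most `(1/2)⌈log₂ n⌉ - 1` inversions contains a sink or a
source. -/
theorem stmt_6 (n : ℕ) (hn : 3 ≤ n) :
    ∃ D : Fin n → Fin n → Prop, (∀ v, ¬ D v v) ∧ edgeConn D 2 ∧
      ∀ Xs : List (Set (Fin n)), (Xs.length : ℝ) ≤ (Nat.clog 2 n : ℝ) / 2 - 1 →
        ∃ v, (∀ w, ¬ dinvFam D Xs v w) ∨ (∀ w, ¬ dinvFam D Xs w v) := by
  set s := (n + 1) / 2
  have hs : 2 ≤ s := by omega
  have he := pendantEnds_spec hs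
  refine ⟨fun u v => cycleWithPendants s (pendantEnds s) u v,
    fun v => cycleWithPendants_irrefl hs he v, edgeConn_cycleWithPendants hs (by omega) he,
    fun Xs hlen => ?_⟩
  set k := Xs.length
  have hpow : 2 ^ (2 * k) * 2 < n := by
    rw [← pow_succ, ← Nat.lt_clog_iff_pow_lt one_lt_two]
    have : ((2 * k + 2 : ℕ) : ℝ) ≤ Nat.clog 2 n := by push_cast; linarith
    exact_mod_cast this
  have hk : 2 ^ k ≤ 2 ^ (2 * k) := Nat.pow_le_pow_right two_pos (by omega)
  obtain ⟨u, hu, v, hv, huv, hmem⟩ := exists_ne_forall_mem_iff_of_two_pow_lt Xs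
    (Finset.Iic ⟨2 ^ k, by omega⟩) (by simp [k])
  wlog hlt : u < v generalizing u v
  · exact this v hv u hu huv.symm (fun X hX => (hmem X hX).symm)
      ((not_lt.1 hlt).lt_of_ne huv.symm)
  replace hv : (v : ℕ) ≤ 2 ^ k := Fin.le_def.1 (Finset.mem_Iic.1 hv)
  obtain ⟨c, hsc, hcn, hc⟩ := exists_pendantEnds_eq hlt (by omega : (v : ℕ) < s)
  have hv2 : (v : ℕ) ^ 2 ≤ 2 ^ (2 * k) := by
    rw [pow_mul']
    exact Nat.pow_le_pow_left hv 2
  exact ⟨⟨c, by omega⟩, sink_or_source_dinvFam_cycleWithPendants he hsc (by simp [hc])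
    (by simp [hc]) Xs hmem⟩
end

section
/- For positive integers n, k with n ≥ k+2, there exists a 2k-edge-connected digraph D on n vertices such that at least (1/2)·log₂(n-k+1) inversions are needed to transform D into a k-arc-strong digraph. -/
section Inversions

variable {V : Type*}

/-- `u` and `v` lie together in an odd number of the sets `Xs`, so that the arcs between them
end up reversed. -/
def Flipped : List (Set V) → V → V → Prop
  | [], _, _ => False
  | X :: Xs, u, v => Xor (u ∈ X ∧ v ∈ X) (Flipped Xs u v)

theorem flipped_comm (Xs : List (Set V)) (u v : V) : Flipped Xs u v ↔ Flipped Xs v u := by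
  induction Xs with
  | nil => rfl
  | cons X Xs ih => simp only [Flipped, ih, and_comm]

theorem flipped_congr_right {Xs : List (Set V)} {a b : V} (h : ∀ X ∈ Xs, a ∈ X ↔ b ∈ X) (w : V) :
    Flipped Xs w a ↔ Flipped Xs w b := by
  induction Xs with
  | nil => rfl
  | cons X Xs ih =>
    simp only [List.mem_cons, forall_eq_or_imp] at h
    simp only [Flipped, h.1, ih h.2]

theorem dinvFam_iff (D : V → V → Prop) (Xs : List (Set V)) (u v : V) :
    dinvFam D Xs u v ↔ (Flipped Xs u v ∧ D v u) ∨ (¬ Flipped Xs u v ∧ D u v) := by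
  induction Xs generalizing D with
  | nil => simp [dinvFam, Flipped]
  | cons X Xs ih =>
    rw [dinvFam, List.foldl_cons, ← dinvFam, ih, Flipped]
    by_cases hu : u ∈ X <;> by_cases hv : v ∈ X <;> by_cases hf : Flipped Xs u v <;>
      simp [dinv, hu, hv, hf]

theorem not_dinvFam_of_not_adj {D : V → V → Prop} (Xs : List (Set V)) {u v : V} (huv : ¬ D u v)
    (hvu : ¬ D v u) : ¬ dinvFam D Xs u v := by
  rw [dinvFam_iff]; tauto

theorem dinvFam_iff_xor {D : V → V → Prop} (Xs : List (Set V)) {u v : V}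
    (h : Xor (D u v) (D v u)) : dinvFam D Xs u v ↔ Xor (D u v) (Flipped Xs u v) := by
  rw [dinvFam_iff]; rw [xor_def] at h ⊢; tauto

theorem dinvFam_swap_iff {D : V → V → Prop} (Xs : List (Set V)) {u v : V}
    (h : Xor (D u v) (D v u)) : dinvFam D Xs v u ↔ ¬ dinvFam D Xs u v := by
  rw [dinvFam_iff, dinvFam_iff, flipped_comm Xs v u]; rw [xor_def] at h; tauto

def crossArcs (D : V → V → Prop) (S : Set V) : Set (V × V) :=
  {p | (p.1 ∈ S ↔ p.2 ∉ S) ∧ D p.1 p.2}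

theorem crossArcs_compl (D : V → V → Prop) (S : Set V) : crossArcs D Sᶜ = crossArcs D S := by
  ext p; simp only [crossArcs, Set.mem_ofPred_eq, Set.mem_compl_iff]; tauto

theorem outCut_add_outCut_swap [Finite V] (D : V → V → Prop) (S : Set V) :
    outCut D S + outCut (fun a b => D b a) S = (crossArcs D S).ncard := by
  have hswap : {p : V × V | p.1 ∈ S ∧ p.2 ∉ S ∧ D p.2 p.1}.ncard =
      (Prod.swap '' {p : V × V | p.1 ∈ S ∧ p.2 ∉ S ∧ D p.2 p.1}).ncard :=
    (Set.ncard_image_of_injective _ Prod.swap_injective).symm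
  rw [outCut, outCut, hswap, ← Set.ncard_union_eq]
  · congr 1
    ext ⟨a, b⟩
    simp only [crossArcs, Set.mem_union, Set.mem_ofPred_eq, Set.mem_image, Prod.exists,
      Prod.swap_prod_mk, Prod.mk.injEq]
    constructor
    · rintro (⟨ha, hb, h⟩ | ⟨_, _, ⟨hb, ha, h⟩, rfl, rfl⟩) <;> tauto
    · rintro ⟨hab, h⟩
      by_cases ha : a ∈ S
      · exact Or.inl ⟨ha, hab.1 ha, h⟩
      · exact Or.inr ⟨b, a, ⟨not_not.1 (mt hab.2 ha), ha, h⟩, rfl, rfl⟩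
  · rw [Set.disjoint_left]
    rintro _ ⟨ha, -, -⟩ ⟨_, ⟨-, ha', -⟩, rfl⟩
    exact ha' ha

theorem edgeConn_iff_crossArcs [Finite V] (D : V → V → Prop) (m : ℕ) :
    edgeConn D m ↔ ∀ S : Set V, S.Nonempty → S ≠ Set.univ → m ≤ (crossArcs D S).ncard := by
  simp only [edgeConn, outCut_add_outCut_swap]

theorem two_le_ncard_crossArcs [Finite V] {D : V → V → Prop} {S : Set V} {p q : V × V}
    (hp : p ∈ crossArcs D S) (hq : q ∈ crossArcs D S) (hpq : p ≠ q) :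
    2 ≤ (crossArcs D S).ncard :=
  (Set.one_lt_ncard_iff).2 ⟨p, q, hp, hq, hpq⟩

section Degrees

variable [Finite V] {D : V → V → Prop} {k : ℕ} {N : Set V} {w a : V}

theorem kArcStrong.exists_out_notMem (hD : kArcStrong D k) (hN : N.ncard < k) (ha : a ≠ w) :
    ∃ u ∉ N, u ≠ w ∧ D w u := by
  by_contra! hout
  have hcut : outCut D {w} ≤ N.ncard := by
    rw [← Set.ncard_image_of_injective N (Prod.mk_right_injective w)]
    refine Set.ncard_le_ncard ?_ (Set.toFinite _)
    rintro ⟨u, v⟩ ⟨rfl, hv, huv⟩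
    exact ⟨v, by_contra fun hvN => hout v hvN hv huv, rfl⟩
  have := hD {w} (Set.singleton_nonempty w) ((Set.ne_univ_iff_exists_notMem _).2 ⟨a, ha⟩)
  omega

theorem kArcStrong.exists_in_notMem (hD : kArcStrong D k) (hN : N.ncard < k) (ha : a ≠ w) :
    ∃ u ∉ N, u ≠ w ∧ D u w := by
  by_contra! hin
  have hcut : outCut D {w}ᶜ ≤ N.ncard := by
    rw [← Set.ncard_image_of_injective N (Prod.mk_left_injective w)]
    refine Set.ncard_le_ncard ?_ (Set.toFinite _)
    rintro ⟨u, v⟩ ⟨hu, hv, huv⟩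
    obtain rfl : v = w := not_not.1 hv
    exact ⟨u, by_contra fun huN => hin u huN hu huv, rfl⟩
  have := hD {w}ᶜ ⟨a, ha⟩ ((Set.ne_univ_iff_exists_notMem _).2 ⟨w, by simp⟩)
  omega

end Degrees

/-- Otherwise all out-arcs, or all in-arcs, of `w` would go to `N`. -/
theorem flipped_iff_not_of_gadget [Finite V] {D : V → V → Prop} {Xs : List (Set V)} {k : ℕ}
    (hD : kArcStrong (dinvFam D Xs) k) {N : Set V} (hN : N.ncard < k) {w a b : V}
    (hnbr : ∀ u ∉ N, D w u ∨ D u w → u = a ∨ u = b)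
    (ha : Xor (D w a) (D a w)) (hb : Xor (D w b) (D b w)) (horient : D w a ↔ D w b) :
    Flipped Xs w a ↔ ¬ Flipped Xs w b := by
  have haw : a ≠ w := by rintro rfl; simp at ha
  have adj : ∀ {u v}, dinvFam D Xs u v → D u v ∨ D v u := fun h => by
    by_contra! hn; exact not_dinvFam_of_not_adj Xs hn.1 hn.2 h
  have hout : dinvFam D Xs w a ∨ dinvFam D Xs w b := by
    obtain ⟨u, huN, -, hu⟩ := kArcStrong.exists_out_notMem hD hN haw
    rcases hnbr u huN (adj hu) with rfl | rfl <;> tauto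
  have hin : dinvFam D Xs a w ∨ dinvFam D Xs b w := by
    obtain ⟨u, huN, -, hu⟩ := kArcStrong.exists_in_notMem hD hN haw
    rcases hnbr u huN (adj hu).symm with rfl | rfl <;> tauto
  rw [dinvFam_swap_iff Xs ha, dinvFam_swap_iff Xs hb] at hin
  rw [dinvFam_iff_xor Xs ha, dinvFam_iff_xor Xs hb] at hout hin
  simp only [xor_def] at ha hb hout hin
  tauto

theorem card_le_two_pow_of_separating {ι : Type*} (f : ι → V) (Xs : List (Set V))
    (hsep : ∀ i j, i ≠ j → ∃ X ∈ Xs, ¬ (f i ∈ X ↔ f j ∈ X)) : Nat.card ι ≤ 2 ^ Xs.length := by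
  let code : ι → Set (Fin Xs.length) := fun i => {l | f i ∈ Xs[l]}
  have hcode : Function.Injective code := by
    intro i j hij
    by_contra hne
    obtain ⟨X, hX, hsepX⟩ := hsep i j hne
    obtain ⟨l, hl, rfl⟩ := List.mem_iff_getElem.1 hX
    exact hsepX (Set.ext_iff.1 hij ⟨l, hl⟩)
  simpa using Nat.card_le_card_of_injective code hcode

end Inversions

section HubJoin

variable {W : Type*} {h : ℕ} {G : W → W → Prop}

def hubJoin (h : ℕ) (G : W → W → Prop) : Fin h ⊕ W → Fin h ⊕ W → Prop
  | .inr a, .inr b => G a b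
  | u, v => u ≠ v

@[simp] theorem hubJoin_inl_left (i : Fin h) (v : Fin h ⊕ W) :
    hubJoin h G (.inl i) v ↔ .inl i ≠ v := by
  cases v <;> rfl

@[simp] theorem hubJoin_inl_right (u : Fin h ⊕ W) (i : Fin h) :
    hubJoin h G u (.inl i) ↔ u ≠ .inl i := by
  cases u <;> rfl

theorem hubJoin_irrefl (hG : ∀ a, ¬ G a a) : ∀ v, ¬ hubJoin h G v v
  | .inl i => by simp
  | .inr a => hG a

theorem ncard_crossArcs_hubJoin_of_subset_hub [Finite W] (hW : 2 ≤ Nat.card W)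
    {S : Set (Fin h ⊕ W)} (hS : S.Nonempty) (hSu : S ≠ Set.univ) (hhub : ∀ a, .inr a ∉ S) :
    2 * (h + 1) ≤ (crossArcs (hubJoin h G) S).ncard := by
  have hsub : S ×ˢ Sᶜ ∪ Sᶜ ×ˢ S ⊆ crossArcs (hubJoin h G) S := by
    rintro ⟨u, v⟩ (⟨hu, hv⟩ | ⟨hu, hv⟩)
    · obtain ⟨i, rfl⟩ : ∃ i, u = .inl i := by cases u <;> simp_all
      exact ⟨⟨fun _ => hv, fun _ => hu⟩, by simpa using ne_of_mem_of_not_mem hu hv⟩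
    · obtain ⟨i, rfl⟩ : ∃ i, v = .inl i := by cases v <;> simp_all
      exact ⟨⟨fun h' => absurd h' hu, fun h' => absurd hv h'⟩,
        by simpa using ne_of_mem_of_not_mem hv hu |>.symm⟩
  have hdisj : Disjoint (S ×ˢ Sᶜ) (Sᶜ ×ˢ S) :=
    Set.disjoint_left.2 fun p hp hp' => hp'.1 hp.1
  have hcard : S.ncard + Sᶜ.ncard = h + Nat.card W := by
    rw [Set.ncard_add_ncard_compl, Nat.card_sum, Nat.card_fin]
  have hpos : 0 < S.ncard := (Set.ncard_pos).2 hS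
  have hpos' : 0 < Sᶜ.ncard := (Set.ncard_pos).2 (Set.nonempty_compl.2 hSu)
  calc 2 * (h + 1) ≤ S.ncard * Sᶜ.ncard + Sᶜ.ncard * S.ncard := by nlinarith
    _ = (S ×ˢ Sᶜ ∪ Sᶜ ×ˢ S).ncard := by
      rw [Set.ncard_union_eq hdisj, Set.ncard_prod, Set.ncard_prod]
    _ ≤ _ := Set.ncard_le_ncard hsub

theorem ncard_crossArcs_hubJoin_of_split [Finite W] {S : Set (Fin h ⊕ W)} {x y : W}
    (hx : .inr x ∈ S) (hy : .inr y ∉ S) :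
    2 * h + (crossArcs G (.inr ⁻¹' S)).ncard ≤ (crossArcs (hubJoin h G) S).ncard := by
  classical
  -- each hub vertex is joined by a digon to whichever of `x`, `y` lies on the other side
  let z : Fin h → Fin h ⊕ W := fun i => if .inl i ∈ S then .inr y else .inr x
  have hz : ∀ i, (.inl i ∈ S ↔ z i ∉ S) := fun i => by
    by_cases hi : .inl i ∈ S <;> simp [z, hi, hx, hy]
  have hzr : ∀ i, ∃ a, z i = .inr a := fun i => by
    by_cases hi : .inl i ∈ S <;> simp [z, hi]
  set T₁ := Set.range fun i => ((.inl i : Fin h ⊕ W), z i)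
  set T₂ := Set.range fun i => (z i, (.inl i : Fin h ⊕ W))
  set T₃ := Prod.map Sum.inr Sum.inr '' crossArcs G (.inr ⁻¹' S)
  have hsub : T₁ ∪ T₂ ∪ T₃ ⊆ crossArcs (hubJoin h G) S := by
    rintro _ ((⟨i, rfl⟩ | ⟨i, rfl⟩) | ⟨⟨a, b⟩, hab, rfl⟩)
    · obtain ⟨a, ha⟩ := hzr i
      exact ⟨hz i, by simp [ha]⟩
    · obtain ⟨a, ha⟩ := hzr i
      exact ⟨by have := hz i; tauto, by simp [ha]⟩
    · exact hab
  have h₁₂ : Disjoint T₁ T₂ := by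
    rw [Set.disjoint_left]
    rintro _ ⟨i, rfl⟩ ⟨j, hj⟩
    obtain ⟨a, ha⟩ := hzr j
    simp [ha] at hj
  have h₁₂₃ : Disjoint (T₁ ∪ T₂) T₃ := by
    rw [Set.disjoint_union_left, Set.disjoint_left, Set.disjoint_left]
    constructor <;> rintro _ ⟨i, rfl⟩ ⟨⟨a, b⟩, -, hab⟩ <;> simp at hab
  have hinj₁ : Function.Injective fun i => ((.inl i : Fin h ⊕ W), z i) :=
    fun i j hij => Sum.inl_injective (Prod.ext_iff.1 hij).1
  have hinj₂ : Function.Injective fun i => (z i, (.inl i : Fin h ⊕ W)) :=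
    fun i j hij => Sum.inl_injective (Prod.ext_iff.1 hij).2
  calc 2 * h + (crossArcs G (.inr ⁻¹' S)).ncard = (T₁ ∪ T₂ ∪ T₃).ncard := by
        rw [Set.ncard_union_eq h₁₂₃, Set.ncard_union_eq h₁₂, Set.ncard_range_of_injective hinj₁,
          Set.ncard_range_of_injective hinj₂,
          Set.ncard_image_of_injective _ (Sum.inr_injective.prodMap Sum.inr_injective)]
        simp [two_mul]
    _ ≤ _ := Set.ncard_le_ncard hsub

theorem edgeConn_hubJoin [Finite W] (hG : edgeConn G 2) (hW : 2 ≤ Nat.card W) :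
    edgeConn (hubJoin h G) (2 * (h + 1)) := by
  rw [edgeConn_iff_crossArcs] at hG ⊢
  intro S hS hSu
  by_cases hsplit : (∃ x, .inr x ∈ S) ∧ ∃ y, .inr y ∉ S
  · obtain ⟨⟨x, hx⟩, ⟨y, hy⟩⟩ := hsplit
    have hcore := hG (Sum.inr ⁻¹' S) ⟨x, hx⟩ ((Set.ne_univ_iff_exists_notMem _).2 ⟨y, hy⟩)
    have := ncard_crossArcs_hubJoin_of_split (G := G) hx hy
    omega
  · simp only [not_and_or, not_exists, not_not] at hsplit
    rcases hsplit with hout | hin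
    · exact ncard_crossArcs_hubJoin_of_subset_hub hW hS hSu hout
    · rw [← crossArcs_compl]
      exact ncard_crossArcs_hubJoin_of_subset_hub hW (Set.nonempty_compl.2 hSu)
        (by simpa using hS.ne_empty) (fun a ha => ha (hin a))

theorem flipped_iff_not_of_hubJoin_gadget [Finite W] {Xs : List (Set (Fin h ⊕ W))}
    (hD : kArcStrong (dinvFam (hubJoin h G) Xs) (h + 1)) {w a b : W}
    (hnbr : ∀ v, G w v ∨ G v w → v = a ∨ v = b)
    (ha : Xor (G w a) (G a w)) (hb : Xor (G w b) (G b w)) (horient : G w a ↔ G w b) :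
    Flipped Xs (.inr w) (.inr a) ↔ ¬ Flipped Xs (.inr w) (.inr b) := by
  refine flipped_iff_not_of_gadget hD (N := Set.range Sum.inl) ?_ ?_ ha hb horient
  · rw [Set.ncard_range_of_injective Sum.inl_injective, Nat.card_fin]
    omega
  · rintro (i | v) hv hadj
    · exact absurd ⟨i, rfl⟩ hv
    · simpa using hnbr v hadj

end HubJoin

section PairGadget

variable {B Γ : Type*} {π : Γ → Sym2 B}

def pairGadget (π : Γ → Sym2 B) : B ⊕ Γ → B ⊕ Γ → Prop
  | .inl a, .inl b => a ≠ b
  | .inr g, .inl a => a ∈ π g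
  | _, _ => False

@[simp] theorem pairGadget_inl_inl (a b : B) : pairGadget π (.inl a) (.inl b) ↔ a ≠ b := Iff.rfl
@[simp] theorem pairGadget_inr_inl (g : Γ) (a : B) : pairGadget π (.inr g) (.inl a) ↔ a ∈ π g :=
  Iff.rfl
@[simp] theorem not_pairGadget_inr (u : B ⊕ Γ) (g : Γ) : ¬ pairGadget π u (.inr g) := by
  cases u <;> exact id

theorem pairGadget_irrefl : ∀ v, ¬ pairGadget π v v
  | .inl _ => by simp
  | .inr g => not_pairGadget_inr _ g

theorem two_le_ncard_crossArcs_pairGadget [Finite B] [Finite Γ] (hπ : ∀ g, ¬ (π g).IsDiag)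
    {S : Set (B ⊕ Γ)} (hS : S.Nonempty) (hB : ∀ a, .inl a ∉ S) :
    2 ≤ (crossArcs (pairGadget π) S).ncard := by
  obtain ⟨_ | g, hg⟩ := hS
  · exact absurd hg (hB _)
  have hdiag := hπ g
  induction hπg : π g using Sym2.ind with
  | _ a b =>
    rw [hπg, Sym2.mk_isDiag_iff] at hdiag
    refine two_le_ncard_crossArcs (p := (.inr g, .inl a)) (q := (.inr g, .inl b)) ?_ ?_ (by simpa)
    · exact ⟨⟨fun _ => hB a, fun _ => hg⟩, by simp [hπg]⟩
    · exact ⟨⟨fun _ => hB b, fun _ => hg⟩, by simp [hπg]⟩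

theorem edgeConn_pairGadget [Finite B] [Finite Γ] (hπ : ∀ g, ¬ (π g).IsDiag) :
    edgeConn (pairGadget π) 2 := by
  rw [edgeConn_iff_crossArcs]
  intro S hS hSu
  by_cases hsplit : ∃ a b, .inl a ∈ S ∧ .inl b ∉ S
  · obtain ⟨a, b, ha, hb⟩ := hsplit
    have hab : a ≠ b := by rintro rfl; exact hb ha
    refine two_le_ncard_crossArcs (p := (.inl a, .inl b)) (q := (.inl b, .inl a)) ?_ ?_
      (by simp [hab])
    · exact ⟨⟨fun _ => hb, fun _ => ha⟩, by simpa⟩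
    · exact ⟨⟨fun h => absurd h hb, fun h => absurd ha h⟩, by simpa using hab.symm⟩
  · simp only [not_exists, not_and, not_not] at hsplit
    by_cases hin : ∃ a, .inl a ∈ S
    · obtain ⟨a, ha⟩ := hin
      rw [← crossArcs_compl]
      exact two_le_ncard_crossArcs_pairGadget hπ (Set.nonempty_compl.2 hSu)
        fun b hb => hb (hsplit a b ha)
    · exact two_le_ncard_crossArcs_pairGadget hπ hS (not_exists.1 hin)

theorem card_le_two_pow_of_pairGadget [Finite B] [Finite Γ] {h : ℕ}
    (hπ : ∀ a b, a ≠ b → ∃ g, π g = s(a, b)) {Xs : List (Set (Fin h ⊕ (B ⊕ Γ)))}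
    (hD : kArcStrong (dinvFam (hubJoin h (pairGadget π)) Xs) (h + 1)) :
    Nat.card B ≤ 2 ^ Xs.length := by
  refine card_le_two_pow_of_separating (fun a => .inr (.inl a)) Xs fun a b hab => ?_
  obtain ⟨g, hg⟩ := hπ a b hab
  have hforced := flipped_iff_not_of_hubJoin_gadget hD (w := .inr g) (a := .inl a) (b := .inl b)
    (by rintro (c | c) hc <;> simp_all) (by simp [hg]) (by simp [hg]) (by simp [hg])
  by_contra! hsame
  rw [flipped_congr_right hsame] at hforced
  exact iff_not_self hforced

end PairGadget

section Cycle

open Fin.NatCast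

theorem exists_mem_add_one_notMem {n : ℕ} [NeZero n] {S : Set (Fin n)} (hS : S.Nonempty)
    (hSu : S ≠ Set.univ) : ∃ i ∈ S, i + 1 ∉ S := by
  by_contra! hclosed
  obtain ⟨i, hi⟩ := hS
  have hiter : ∀ l : ℕ, i + l ∈ S := by
    intro l
    induction l with
    | zero => simpa using hi
    | succ l ih => simpa [add_assoc] using hclosed _ ih
  exact hSu (Set.eq_univ_of_forall fun j => by simpa using hiter (j - i).val)

theorem edgeConn_two_of_cycle {n : ℕ} {D : Fin (n + 3) → Fin (n + 3) → Prop}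
    (hD : ∀ i, D i (i + 1) ∨ D (i + 1) i) : edgeConn D 2 := by
  rw [edgeConn_iff_crossArcs]
  intro S hS hSu
  obtain ⟨i, hi, hi'⟩ := exists_mem_add_one_notMem hS hSu
  obtain ⟨j, hj, hj'⟩ := exists_mem_add_one_notMem (Set.nonempty_compl.2 hSu)
    (by simpa using hS.ne_empty)
  rw [Set.mem_compl_iff, not_not] at hj'
  rw [Set.mem_compl_iff] at hj
  have htwo : (i + 1 + 1 : Fin (n + 3)) ≠ i := by
    rw [add_assoc, Ne, add_eq_left, Fin.ext_iff, Fin.val_add, Fin.val_one, Fin.val_zero,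
      Nat.mod_eq_of_lt (by omega)]
    omega
  obtain ⟨p, hp, hpi⟩ : ∃ p ∈ crossArcs D S, p = (i, i + 1) ∨ p = (i + 1, i) := by
    rcases hD i with h | h
    · exact ⟨_, ⟨⟨fun _ => hi', fun _ => hi⟩, h⟩, Or.inl rfl⟩
    · exact ⟨_, ⟨⟨fun h' => absurd h' hi', fun h' => absurd hi h'⟩, h⟩, Or.inr rfl⟩
  obtain ⟨q, hq, hqj⟩ : ∃ q ∈ crossArcs D S, q = (j, j + 1) ∨ q = (j + 1, j) := by
    rcases hD j with h | h
    · exact ⟨_, ⟨⟨fun h' => absurd h' hj, fun h' => absurd hj' h'⟩, h⟩, Or.inl rfl⟩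
    · exact ⟨_, ⟨⟨fun _ => hj, fun _ => hj'⟩, h⟩, Or.inr rfl⟩
  refine two_le_ncard_crossArcs hp hq ?_
  rintro rfl
  rcases hpi with rfl | rfl <;> rcases hqj with h | h <;> simp only [Prod.mk.injEq] at h
  · exact hj (h.1 ▸ hi)
  · exact htwo (by rw [h.2, h.1])
  · exact htwo (by rw [h.1, h.2])
  · exact hj (h.2 ▸ hi)

end Cycle

section Pentagon

def pentagon (u v : Fin 5) : Prop :=
  u = 0 ∧ (v = 1 ∨ v = 4) ∨ u = 2 ∧ (v = 1 ∨ v = 3) ∨ u = 4 ∧ v = 3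

instance : DecidableRel pentagon := fun u v => by unfold pentagon; infer_instance

theorem pentagon_irrefl : ∀ v, ¬ pentagon v v := by decide

theorem edgeConn_pentagon : edgeConn pentagon 2 :=
  edgeConn_two_of_cycle (n := 2) (by decide)

/-- With a single inversion `X`, the gadget at `1` puts `1` and exactly one of `0`, `2` into `X`,
while the gadgets at `0` and `2` then put both of them into `X`. -/
theorem two_le_length_of_pentagon {h : ℕ} {Xs : List (Set (Fin h ⊕ Fin 5))}
    (hD : kArcStrong (dinvFam (hubJoin h pentagon) Xs) (h + 1)) : 2 ≤ Xs.length := by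
  have h₀ := flipped_iff_not_of_hubJoin_gadget hD (w := 0) (a := 1) (b := 4)
    (by decide) (by decide) (by decide) (by decide)
  have h₂ := flipped_iff_not_of_hubJoin_gadget hD (w := 2) (a := 1) (b := 3)
    (by decide) (by decide) (by decide) (by decide)
  have h₁ := flipped_iff_not_of_hubJoin_gadget hD (w := 1) (a := 0) (b := 2)
    (by decide) (by decide) (by decide) (by decide)
  rcases Xs with _ | ⟨X, _ | ⟨Y, Xs⟩⟩
  · simp [Flipped] at h₀
  · simp only [Flipped, xor_def, not_false_eq_true, and_true] at h₀ h₁ h₂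
    tauto
  · simp

end Pentagon

theorem exists_choose_two_le_le_sq {r : ℕ} (hr : 3 ≤ r) (hr5 : r ≠ 5) :
    ∃ m, 2 ≤ m ∧ m + m.choose 2 ≤ r ∧ r ≤ m ^ 2 := by
  obtain ⟨q, rfl⟩ : ∃ q, r = q + 1 := ⟨r - 1, by omega⟩
  have hlo := Nat.sqrt_le' q
  have hhi := Nat.lt_succ_sqrt' q
  generalize Nat.sqrt q = s at hlo hhi
  refine ⟨s + 1, ?_, ?_, hhi⟩
  · by_contra! hs
    obtain rfl : s = 0 := by omega
    norm_num at hhi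
    omega
  have : s ≤ s ^ 2 := Nat.le_self_pow two_ne_zero s
  suffices (s + 1).choose 2 ≤ q - s by omega
  rw [Nat.choose_two_right, Nat.add_sub_cancel, show (s + 1) * s = s ^ 2 + s by ring]
  refine Nat.div_le_of_le_mul ?_
  rcases (by omega : s ≤ 2 ∨ 3 ≤ s) with hs | hs
  · interval_cases s <;> omega
  · have : 3 * s ≤ s ^ 2 := by nlinarith
    omega

theorem logb_two_div_two_le {r t : ℕ} (hr : r ≤ 4 ^ t) : Real.logb 2 r / 2 ≤ t := by
  rcases r.eq_zero_or_pos with rfl | hr0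
  · simp
  have hlog : Real.logb 2 r ≤ Real.logb 2 ((2 : ℝ) ^ (2 * t)) :=
    Real.logb_le_logb_of_le (by norm_num) (by positivity)
      (by rw [pow_mul]; norm_num; exact_mod_cast hr)
  rw [Real.logb_pow, Real.logb_self_eq_one (by norm_num)] at hlog
  push_cast at hlog
  linarith

section Transfer

variable {α β : Type*} (e : α ≃ β)

theorem outCut_comp_equiv (D : β → β → Prop) (S : Set β) :
    outCut (fun u v => D (e u) (e v)) (e ⁻¹' S) = outCut D S := by
  unfold outCut
  exact Set.ncard_preimage_of_injective_subset_range (f := Prod.map e e)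
    (s := {p | p.1 ∈ S ∧ p.2 ∉ S ∧ D p.1 p.2})
    (e.injective.prodMap e.injective) (by simp [Set.range_prodMap])

theorem kArcStrong_of_comp_equiv {D : β → β → Prop} {k : ℕ}
    (hD : kArcStrong (fun u v => D (e u) (e v)) k) : kArcStrong D k := fun S hS hSu => by
  rw [← outCut_comp_equiv e]
  exact hD _ (hS.preimage e.surjective) (by simpa [Set.preimage_eq_univ_iff] using hSu)

theorem edgeConn_comp_equiv {D : β → β → Prop} {m : ℕ} (hD : edgeConn D m) :
    edgeConn (fun u v => D (e u) (e v)) m := fun S hS hSu => by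
  rw [← e.preimage_symm_preimage S]
  have := hD (e.symm ⁻¹' S) (hS.preimage e.symm.surjective)
    (by simpa [Set.preimage_eq_univ_iff] using hSu)
  rwa [← outCut_comp_equiv e, ← outCut_comp_equiv e (fun a b => D b a)] at this

theorem dinvFam_comp_equiv (D : β → β → Prop) (Xs : List (Set α)) :
    dinvFam (fun u v => D (e u) (e v)) Xs =
      fun u v => dinvFam D (Xs.map (e.symm ⁻¹' ·)) (e u) (e v) := by
  induction Xs generalizing D with
  | nil => rfl
  | cons X Xs ih =>
    have hstep : dinv (fun u v => D (e u) (e v)) X =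
        fun u v => dinv D (e.symm ⁻¹' X) (e u) (e v) := by
      funext u v; simp [dinv]
    simp only [dinvFam, List.foldl_cons, List.map_cons] at ih ⊢
    rw [hstep, ih]

end Transfer

theorem exists_pairCover {B Γ : Type*} [Fintype B] [DecidableEq B] [Nontrivial B] [Fintype Γ]
    (hcard : (Fintype.card B).choose 2 ≤ Fintype.card Γ) :
    ∃ π : Γ → Sym2 B, (∀ g, ¬ (π g).IsDiag) ∧ ∀ a b, a ≠ b → ∃ g, π g = s(a, b) := by
  obtain ⟨emb⟩ := Function.Embedding.nonempty_of_card_le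
    (Sym2.card_subtype_not_diag (α := B) ▸ hcard)
  obtain ⟨a₀, b₀, hab₀⟩ := exists_pair_ne B
  have : Nonempty {z : Sym2 B // ¬ z.IsDiag} := ⟨⟨s(a₀, b₀), by simpa⟩⟩
  refine ⟨fun g => (Function.invFun emb g).1, fun g => (Function.invFun emb g).2, fun a b hab =>
    ⟨emb ⟨s(a, b), by simpa⟩, by simp only [Function.leftInverse_invFun emb.injective _]⟩⟩

theorem exists_core (h : ℕ) {r : ℕ} (hr : 3 ≤ r) :
    ∃ (W : Type) (_ : Finite W) (G : W → W → Prop), Nat.card W = r ∧ (∀ a, ¬ G a a) ∧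
      edgeConn G 2 ∧ ∀ Xs : List (Set (Fin h ⊕ W)),
        kArcStrong (dinvFam (hubJoin h G) Xs) (h + 1) → r ≤ 4 ^ Xs.length := by
  by_cases hr5 : r = 5
  · subst hr5
    refine ⟨Fin 5, inferInstance, pentagon, by simp, pentagon_irrefl, edgeConn_pentagon,
      fun Xs hXs => ?_⟩
    calc 5 ≤ 4 ^ 2 := by norm_num
      _ ≤ 4 ^ Xs.length := Nat.pow_le_pow_right (by norm_num) (two_le_length_of_pentagon hXs)
  obtain ⟨m, hm, hmr, hrm⟩ := exists_choose_two_le_le_sq hr hr5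
  have : Nontrivial (Fin m) := Fin.nontrivial_iff_two_le.2 hm
  obtain ⟨π, hπ, hπsurj⟩ := exists_pairCover (B := Fin m) (Γ := Fin (r - m)) (by simp; omega)
  refine ⟨Fin m ⊕ Fin (r - m), inferInstance, pairGadget π, by simp; omega, pairGadget_irrefl,
    edgeConn_pairGadget hπ, fun Xs hXs => ?_⟩
  have hB := card_le_two_pow_of_pairGadget hπsurj hXs
  rw [Nat.card_fin] at hB
  calc r ≤ m ^ 2 := hrm
    _ ≤ (2 ^ Xs.length) ^ 2 := Nat.pow_le_pow_left hB 2
    _ = 4 ^ Xs.length := by rw [← pow_mul, mul_comm, pow_mul]; norm_num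

/-- For `n ≥ k+2`, there is a `2k`-edge-connected digraph `D` on `n` vertices such that every
family of inversions transforming `D` into a `k`-arc-strong digraph has size at least
`(1/2)·log₂(n-k+1)`. -/
theorem stmt_7 (n k : ℕ) (hk : 0 < k) (hn : k + 2 ≤ n) :
    ∃ D : Fin n → Fin n → Prop, (∀ v, ¬ D v v) ∧ edgeConn D (2 * k) ∧
      ∀ Xs : List (Set (Fin n)), kArcStrong (dinvFam D Xs) k →
        Real.logb 2 ((n : ℝ) - (k : ℝ) + 1) / 2 ≤ (Xs.length : ℝ) := by
  obtain ⟨h, rfl⟩ : ∃ h, k = h + 1 := ⟨k - 1, by omega⟩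
  obtain ⟨r, rfl⟩ : ∃ r, n = h + r := ⟨n - h, by omega⟩
  obtain ⟨W, _, G, hW, hirr, hconn, hbound⟩ := exists_core h (r := r) (by omega)
  obtain ⟨e⟩ : Nonempty (Fin (h + r) ≃ Fin h ⊕ W) := Finite.card_eq.1 (by simp [hW])
  refine ⟨fun u v => hubJoin h G (e u) (e v), fun v => hubJoin_irrefl hirr (e v),
    edgeConn_comp_equiv e (edgeConn_hubJoin hconn (by omega)), fun Xs hXs => ?_⟩
  rw [dinvFam_comp_equiv] at hXs
  have hr := hbound _ (kArcStrong_of_comp_equiv e hXs)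
  rw [List.length_map] at hr
  calc Real.logb 2 (((h + r : ℕ) : ℝ) - ((h + 1 : ℕ) : ℝ) + 1) / 2 = Real.logb 2 r / 2 := by
        push_cast; ring_nf
    _ ≤ _ := logb_two_div_two_le hr
end

section
/- For any graph G, the cut covering number of G equals ⌈log₂ χ(G)⌉, where χ(G) is the chromatic number. -/
/-!
A family `X : ι → Set V` covers every edge by a cut exactly when the membership pattern
`v ↦ (v ∈ X i)ᵢ` separates adjacent vertices, i.e. is a proper colouring with colours in
`ι → Prop`; conversely each coordinate of a colouring by binary strings of length `t` is a cut.
So a cut cover of size `t` exists iff `G` is `2 ^ t`-colourable, i.e. iff `χ(G) ≤ 2 ^ t`.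
-/

namespace SimpleGraph

variable {V ι : Type*} {G : SimpleGraph V}

variable (G) in
def IsCutCover (X : ι → Set V) : Prop :=
  ∀ u v : V, G.Adj u v → ∃ i, (u ∈ X i ∧ v ∉ X i) ∨ (v ∈ X i ∧ u ∉ X i)

def IsCutCover.coloring {X : ι → Set V} (hX : G.IsCutCover X) : G.Coloring (ι → Prop) :=
  Coloring.mk (fun v i => v ∈ X i) fun {u v} huv heq => by
    obtain ⟨i, hi | hi⟩ := hX u v huv
    · exact hi.2 ((congrFun heq i).mp hi.1)
    · exact hi.2 ((congrFun heq i).mpr hi.1)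

theorem Coloring.isCutCover (C : G.Coloring (ι → Bool)) : G.IsCutCover fun i => {v | C v i} := by
  intro u v huv
  obtain ⟨i, hi⟩ := Function.ne_iff.mp (C.valid huv)
  refine ⟨i, ?_⟩
  cases hu : C u i <;> cases hv : C v i <;> simp_all

theorem colorable_two_pow_card_iff_exists_isCutCover [Fintype ι] :
    G.Colorable (2 ^ Fintype.card ι) ↔ ∃ X : ι → Set V, G.IsCutCover X := by
  classical
  constructor
  · intro hc
    exact ⟨_, (hc.toColoring (α := ι → Bool) (by simp)).isCutCover⟩
  · rintro ⟨X, hX⟩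
    simpa using hX.coloring.colorable

theorem toNat_chromaticNumber_le_iff_colorable [Finite V] {n : ℕ} :
    G.chromaticNumber.toNat ≤ n ↔ G.Colorable n :=
  ⟨fun h => G.colorable_chromaticNumber_of_fintype.mono h,
    fun hc => by simpa using ENat.toNat_le_toNat hc.chromaticNumber_le (ENat.natCast_ne_top n)⟩

end SimpleGraph

/-- For any graph `G`, the cut covering number of `G` (the least `t` such that there are vertex
sets `X_1, …, X_t` with every edge of `G` crossing some `X_i`) equals `⌈log₂ χ(G)⌉`. -/
theorem stmt_9 {V : Type*} [Fintype V] (G : SimpleGraph V) :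
    IsLeast {t : ℕ | ∃ X : Fin t → Set V, ∀ u v : V, G.Adj u v →
        ∃ i, (u ∈ X i ∧ v ∉ X i) ∨ (v ∈ X i ∧ u ∉ X i)}
      (Nat.clog 2 G.chromaticNumber.toNat) := by
  have hcovers : {t : ℕ | ∃ X : Fin t → Set V, G.IsCutCover X} =
      Set.Ici (Nat.clog 2 G.chromaticNumber.toNat) := by
    ext t
    have hcover := G.colorable_two_pow_card_iff_exists_isCutCover (ι := Fin t)
    rw [Fintype.card_fin] at hcover
    rw [Set.mem_Ici, Nat.clog_le_iff_le_pow one_lt_two,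
      SimpleGraph.toNat_chromaticNumber_le_iff_colorable, hcover]
    rfl
  exact hcovers ▸ isLeast_Ici
end

section
/- Let H be a mixed graph whose underlying graph is eulerian. Then H has an eulerian orientation (an orientation of its edges so that every vertex has equal in- and out-degree) if and only if for every vertex subset S, the number of undirected edges leaving S is at least d^+(S) - d^-(S), where d^+(S) and d^-(S) count arcs leaving and entering S respectively. -/
/-!
An eulerian orientation amounts to choosing a tail for every undirected edge so that each
vertex `v` is the tail of exactly `c v = (deg_E v + d_A⁻ v - d_A⁺ v) / 2` edges, an integer by
the parity hypothesis and nonnegative by the cut condition for `S = {v}`. Splitting `v` into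
`c v` slots turns this into a matching problem, so by Hall's theorem it is solvable iff every
vertex set `X` has `e(X) ≤ ∑_{v ∈ X} c v`. Counting degrees,
`2 ∑_{v ∈ X} c v = 2 e(X) + d_E(X) - (d_A⁺(X) - d_A⁻(X))`, so this is exactly the cut condition.
Conversely, in a balanced orientation no net flow leaves `S`, and the undirected edges can
carry at most `d_E(S)` of it back in.
-/

open Finset

theorem Finset.exists_card_fiber_eq_of_hall {ι V : Type*} [Fintype ι] [Fintype V] [DecidableEq V]
    (N : ι → Finset V) (c : V → ℕ) (hcard : ∑ v, c v = Fintype.card ι)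
    (hall : ∀ s : Finset ι, #s ≤ ∑ v ∈ s.biUnion N, c v) :
    ∃ g : ι → V, (∀ i, g i ∈ N i) ∧ ∀ v, #{i | g i = v} = c v := by
  let slots (i : ι) : Finset (Σ v, Fin (c v)) := (N i).sigma fun _ => univ
  have hslots (s : Finset ι) : s.biUnion slots = (s.biUnion N).sigma fun _ => univ := by
    ext ⟨v, k⟩; simp [slots]
  obtain ⟨f, hf_inj, hf_mem⟩ := (all_card_le_biUnion_card_iff_exists_injective slots).1
    fun s => by simpa [hslots, card_sigma] using hall s
  have hf_bij : Function.Bijective f :=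
    (Fintype.bijective_iff_injective_and_card f).2 ⟨hf_inj, by simp [hcard]⟩
  refine ⟨fun i => (f i).1, fun i => by simpa [slots] using hf_mem i, fun v => ?_⟩
  calc #{i | (f i).1 = v} = #{x : Σ v, Fin (c v) | x.1 = v} :=
        card_equiv (Equiv.ofBijective f hf_bij) (by simp)
    _ = #(({v} : Finset V).sigma fun _ => univ) := by congr 1; ext ⟨w, k⟩; simp
    _ = c v := by simp [card_sigma]

namespace SimpleGraph

variable {V : Type*} (G : SimpleGraph V)

def tailOrientation (g : G.edgeSet → V) (u v : V) : Prop :=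
  ∃ h : G.Adj u v, g ⟨s(u, v), h⟩ = u

variable {G}

theorem adj_of_tailOrientation {g : G.edgeSet → V} {u v : V} (h : G.tailOrientation g u v) :
    G.Adj u v :=
  h.1

theorem tailOrientation_iff_not {g : G.edgeSet → V} (hg : ∀ e : G.edgeSet, g e ∈ (e : Sym2 V))
    {u v : V} (h : G.Adj u v) : G.tailOrientation g u v ↔ ¬ G.tailOrientation g v u := by
  have hswap : (⟨s(v, u), h.symm⟩ : G.edgeSet) = ⟨s(u, v), h⟩ := Subtype.ext Sym2.eq_swap
  simp only [tailOrientation, exists_prop_of_true h, exists_prop_of_true h.symm, hswap]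
  rcases Sym2.mem_iff.1 (hg ⟨s(u, v), h⟩) with htail | htail <;> simp [htail, h.ne, h.ne.symm]

theorem ncard_tailOrientation {g : G.edgeSet → V} (hg : ∀ e : G.edgeSet, g e ∈ (e : Sym2 V))
    (v : V) :
    {w | G.tailOrientation g v w}.ncard = {e | g e = v}.ncard := by
  refine Set.ncard_congr (fun w hw => ⟨s(v, w), hw.1⟩) (fun w ⟨_, hw⟩ => hw)
    (fun w w' _ _ h => Sym2.congr_right.1 (congrArg Subtype.val h)) fun e he => ?_
  have hv : v ∈ (e : Sym2 V) := he ▸ hg e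
  have hadj : G.Adj v (Sym2.Mem.other hv) := by
    rw [← mem_edgeSet, Sym2.other_spec hv]; exact e.2
  have hother : (⟨s(v, Sym2.Mem.other hv), hadj⟩ : G.edgeSet) = e :=
    Subtype.ext (Sym2.other_spec hv)
  exact ⟨Sym2.Mem.other hv, ⟨hadj, (congrArg g hother).trans he⟩, hother⟩

variable [Fintype V]

theorem two_mul_card_le_ncard_adj_of_forall_mem [DecidableEq V] [DecidableRel G.Adj]
    (s : Finset G.edgeSet) (X : Finset V) (hX : ∀ e ∈ s, ∀ v ∈ (e : Sym2 V), v ∈ X) :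
    2 * #s ≤ {p : V × V | p.1 ∈ X ∧ p.2 ∈ X ∧ G.Adj p.1 p.2}.ncard := by
  let edge (d : G.Dart) : G.edgeSet := ⟨d.edge, d.edge_mem⟩
  have hfiber : 2 * #s = #{d : G.Dart | edge d ∈ s} := by
    rw [card_eq_sum_card_fiberwise (f := edge) (t := s) (fun d hd => by simpa using hd),
      mul_comm, ← smul_eq_mul, ← sum_const]
    refine sum_congr rfl fun e he => ?_
    rw [← G.dart_edge_fiber_card e e.2]
    congr 1; ext d
    simp only [mem_filter, mem_univ, true_and, edge, Subtype.ext_iff]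
    exact ⟨fun h => ⟨by convert he, h⟩, And.right⟩
  rw [hfiber, ← Set.ncard_coe_finset]
  refine Set.ncard_le_ncard_of_injOn Dart.toProd (fun d hd => ?_) Dart.toProd_injective.injOn
  simp only [coe_filter, mem_univ, true_and] at hd
  exact ⟨hX _ hd _ (Sym2.mem_mk_left _ _), hX _ hd _ (Sym2.mem_mk_right _ _), d.adj⟩

theorem exists_orientation_ncard_out_eq (c : V → ℕ) (hcard : ∑ v, c v = G.edgeSet.ncard)
    (hX : ∀ X : Finset V,
      {p : V × V | p.1 ∈ X ∧ p.2 ∈ X ∧ G.Adj p.1 p.2}.ncard ≤ 2 * ∑ v ∈ X, c v) :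
    ∃ O : V → V → Prop, (∀ u v, O u v → G.Adj u v) ∧ (∀ u v, G.Adj u v → (O u v ↔ ¬ O v u)) ∧
      ∀ v, {w | O v w}.ncard = c v := by
  classical
  let ends (e : G.edgeSet) : Finset V := (e : Sym2 V).toFinset
  obtain ⟨g, hg, hfiber⟩ := exists_card_fiber_eq_of_hall ends c
    (by rw [hcard, Set.ncard_eq_toFinset_card', Set.toFinset_card]) fun s => by
      have := G.two_mul_card_le_ncard_adj_of_forall_mem s (s.biUnion ends)
        fun e he v hv => mem_biUnion.2 ⟨e, he, Sym2.mem_toFinset.2 hv⟩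
      linarith [hX (s.biUnion ends)]
  have hg' (e : G.edgeSet) : g e ∈ (e : Sym2 V) := Sym2.mem_toFinset.1 (hg e)
  refine ⟨G.tailOrientation g, fun _ _ => adj_of_tailOrientation,
    fun _ _ => tailOrientation_iff_not hg', fun v => ?_⟩
  rw [ncard_tailOrientation hg', ← hfiber v, ← Set.ncard_coe_finset, coe_filter]
  simp

theorem sum_ncard_neighborSet_eq : ∑ v, (G.neighborSet v).ncard = 2 * G.edgeSet.ncard := by
  classical
  convert G.sum_degrees_eq_twice_card_edges using 2 with v
  · rw [← G.card_neighborFinset_eq_degree, G.neighborFinset_def, Set.ncard_eq_toFinset_card']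
  · rw [edgeFinset, Set.ncard_eq_toFinset_card']

end SimpleGraph

theorem ncard_setOf_flip_eq {V : Type*} (R : V → V → Prop) (S : Finset V) :
    {p : V × V | p.1 ∈ S ∧ p.2 ∈ S ∧ R p.2 p.1}.ncard
      = {p : V × V | p.1 ∈ S ∧ p.2 ∈ S ∧ R p.1 p.2}.ncard := by
  rw [← Set.ncard_image_of_injective _ Prod.swap_injective]
  congr 1; ext ⟨u, w⟩; simp; tauto

theorem ncard_out_add_ncard_in_of_orientation {V : Type*} [Finite V] {E O : V → V → Prop}
    (hEsymm : ∀ u v, E u v → E v u) (hOE : ∀ u v, O u v → E u v)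
    (hO : ∀ u v, E u v → (O u v ↔ ¬ O v u)) (v : V) :
    {w | O v w}.ncard + {w | O w v}.ncard = {w | E v w}.ncard := by
  rw [← Set.ncard_union_eq (s := {w | O v w}) (t := {w | O w v})
    (Set.disjoint_left.2 fun w hvw hwv => (hO v w (hOE v w hvw)).1 hvw hwv)]
  congr 1
  ext w
  refine ⟨?_, fun hvw => ?_⟩
  · rintro (hvw | hwv)
    exacts [hOE v w hvw, hEsymm w v (hOE w v hwv)]
  · by_cases hO' : O v w
    exacts [Or.inl hO', Or.inr (not_not.1 (mt (hO v w hvw).2 hO'))]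

section MixedGraph

variable {V : Type*} [Fintype V]

theorem sum_ncard_setOf_rel_eq (R : V → V → Prop) (S : Finset V) :
    ∑ v ∈ S, {w | R v w}.ncard = {p : V × V | p.1 ∈ S ∧ p.2 ∈ S ∧ R p.1 p.2}.ncard
      + {p : V × V | p.1 ∈ S ∧ p.2 ∉ S ∧ R p.1 p.2}.ncard := by
  classical
  rw [← Set.ncard_union_eq (Set.disjoint_left.2 fun p hp hp' => hp'.2.1 hp.2.1)]
  have : {p : V × V | p.1 ∈ S ∧ p.2 ∈ S ∧ R p.1 p.2} ∪ {p | p.1 ∈ S ∧ p.2 ∉ S ∧ R p.1 p.2}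
      = (((S.sigma fun v => ({w | R v w} : Finset V)).map
        (Equiv.sigmaEquivProd V V).toEmbedding : Finset (V × V)) : Set (V × V)) := by
    ext ⟨u, w⟩; simp; tauto
  rw [this, Set.ncard_coe_finset, card_map, card_sigma]
  simp [Set.ncard_eq_toFinset_card']

theorem sum_ncard_out_sub_ncard_in (R : V → V → Prop) (S : Finset V) :
    ∑ v ∈ S, (({w | R v w}.ncard : ℤ) - {w | R w v}.ncard)
      = ({p : V × V | p.1 ∈ S ∧ p.2 ∉ S ∧ R p.1 p.2}.ncard : ℤ)
        - {p : V × V | p.1 ∈ S ∧ p.2 ∉ S ∧ R p.2 p.1}.ncard := by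
  have hout := sum_ncard_setOf_rel_eq R S
  have hin := sum_ncard_setOf_rel_eq (fun a b => R b a) S
  rw [ncard_setOf_flip_eq] at hin
  rw [sum_sub_distrib]
  push_cast [← Nat.cast_sum] at *
  omega

theorem sum_ncard_out_sub_ncard_in_univ (R : V → V → Prop) :
    ∑ v, (({w | R v w}.ncard : ℤ) - {w | R w v}.ncard) = 0 := by
  simpa using sum_ncard_out_sub_ncard_in R univ

theorem sub_le_ncard_cut_of_balanced {E A O : V → V → Prop} (hEsymm : ∀ u v, E u v → E v u)
    (hOE : ∀ u v, O u v → E u v)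
    (hbal : ∀ v, {w | A v w}.ncard + {w | O v w}.ncard = {w | A w v}.ncard + {w | O w v}.ncard)
    (S : Set V) :
    ({p : V × V | p.1 ∈ S ∧ p.2 ∉ S ∧ A p.1 p.2}.ncard : ℤ)
      - {p : V × V | p.1 ∈ S ∧ p.2 ∉ S ∧ A p.2 p.1}.ncard
      ≤ {p : V × V | p.1 ∈ S ∧ p.2 ∉ S ∧ E p.1 p.2}.ncard := by
  classical
  have hnetA := sum_ncard_out_sub_ncard_in A S.toFinset
  have hnetO := sum_ncard_out_sub_ncard_in O S.toFinset
  have hnet_zero : ∑ v ∈ S.toFinset, (({w | A v w}.ncard : ℤ) - {w | A w v}.ncard)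
      + ∑ v ∈ S.toFinset, (({w | O v w}.ncard : ℤ) - {w | O w v}.ncard) = 0 := by
    rw [← sum_add_distrib]
    exact sum_eq_zero fun v _ => by have := hbal v; omega
  have hOin : {p : V × V | p.1 ∈ S ∧ p.2 ∉ S ∧ O p.2 p.1}.ncard
      ≤ {p : V × V | p.1 ∈ S ∧ p.2 ∉ S ∧ E p.1 p.2}.ncard :=
    Set.ncard_le_ncard fun p ⟨h1, h2, h⟩ => ⟨h1, h2, hEsymm _ _ (hOE _ _ h)⟩
  simp only [Set.mem_toFinset] at hnetA hnetO
  omega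

theorem ncard_inner_le_sum_of_cut_condition {E A : V → V → Prop}
    (hcut : ∀ S : Set V,
      ({p : V × V | p.1 ∈ S ∧ p.2 ∉ S ∧ A p.1 p.2}.ncard : ℤ)
        - {p : V × V | p.1 ∈ S ∧ p.2 ∉ S ∧ A p.2 p.1}.ncard
        ≤ {p : V × V | p.1 ∈ S ∧ p.2 ∉ S ∧ E p.1 p.2}.ncard)
    (X : Finset V) :
    ({p : V × V | p.1 ∈ X ∧ p.2 ∈ X ∧ E p.1 p.2}.ncard : ℤ)
      ≤ ∑ v ∈ X, (({w | E v w}.ncard : ℤ) + {w | A w v}.ncard - {w | A v w}.ncard) := by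
  have hE := sum_ncard_setOf_rel_eq E X
  have hA := sum_ncard_out_sub_ncard_in A X
  have hX := hcut X
  simp only [Finset.mem_coe] at hX
  simp only [sum_sub_distrib, sum_add_distrib] at hA ⊢
  push_cast [← Nat.cast_sum] at *
  omega

theorem exists_balanced_orientation_of_cut_condition {E A : V → V → Prop}
    (hEsymm : ∀ u v, E u v → E v u) (hEirr : ∀ v, ¬ E v v)
    (heul : ∀ v : V, Even ({w | E v w}.ncard + {w | A v w}.ncard + {w | A w v}.ncard))
    (hcut : ∀ S : Set V,
      ({p : V × V | p.1 ∈ S ∧ p.2 ∉ S ∧ A p.1 p.2}.ncard : ℤ)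
        - {p : V × V | p.1 ∈ S ∧ p.2 ∉ S ∧ A p.2 p.1}.ncard
        ≤ {p : V × V | p.1 ∈ S ∧ p.2 ∉ S ∧ E p.1 p.2}.ncard) :
    ∃ O : V → V → Prop, (∀ u v, O u v → E u v) ∧ (∀ u v, E u v → (O u v ↔ ¬ O v u)) ∧
      ∀ v, {w | A v w}.ncard + {w | O v w}.ncard = {w | A w v}.ncard + {w | O w v}.ncard := by
  let G : SimpleGraph V := ⟨E, ⟨hEsymm⟩, ⟨hEirr⟩⟩
  have hinner := ncard_inner_le_sum_of_cut_condition hcut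
  obtain ⟨c, hc⟩ : ∃ c : V → ℕ,
      ∀ v, ({w | E v w}.ncard : ℤ) + {w | A w v}.ncard - {w | A v w}.ncard = 2 * c v := by
    refine ⟨fun v => (({w | E v w}.ncard + {w | A w v}.ncard - {w | A v w}.ncard : ℤ) / 2).toNat,
      fun v => ?_⟩
    obtain ⟨k, hk⟩ := heul v
    have := hinner {v}
    simp only [sum_singleton] at this ⊢
    omega
  have hcard : ∑ v, c v = G.edgeSet.ncard := by
    have hdeg : ∑ v, {w | E v w}.ncard = 2 * G.edgeSet.ncard := G.sum_ncard_neighborSet_eq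
    have hA := sum_ncard_out_sub_ncard_in_univ A
    have hsum := sum_congr rfl fun v (_ : v ∈ univ) => hc v
    simp only [sum_sub_distrib, sum_add_distrib, ← mul_sum] at hA hsum
    push_cast [← Nat.cast_sum] at *
    omega
  obtain ⟨O, hOE, hO, hOout⟩ := G.exists_orientation_ncard_out_eq c hcard fun X => by
    have := hinner X
    rw [sum_congr rfl fun v _ => hc v, ← mul_sum] at this
    exact_mod_cast this
  refine ⟨O, hOE, hO, fun v => ?_⟩
  have hdeg := ncard_out_add_ncard_in_of_orientation hEsymm hOE hO v
  have := hc v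
  rw [hOout] at hdeg ⊢
  omega

end MixedGraph

theorem stmt_11_general {V : Type*} [Fintype V]
    (E : V → V → Prop) (hEsymm : ∀ u v, E u v → E v u) (hEirr : ∀ v, ¬ E v v)
    (A : V → V → Prop)
    (heul : ∀ v : V, Even ({w | E v w}.ncard + {w | A v w}.ncard + {w | A w v}.ncard)) :
    (∃ O : V → V → Prop, (∀ u v, O u v → E u v) ∧ (∀ u v, E u v → (O u v ↔ ¬ O v u)) ∧
        ∀ v : V, {w | A v w}.ncard + {w | O v w}.ncard
          = {w | A w v}.ncard + {w | O w v}.ncard)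
    ↔ ∀ S : Set V,
        ({p : V × V | p.1 ∈ S ∧ p.2 ∉ S ∧ A p.1 p.2}.ncard : ℤ)
          - ({p : V × V | p.1 ∈ S ∧ p.2 ∉ S ∧ A p.2 p.1}.ncard : ℤ)
          ≤ ({p : V × V | p.1 ∈ S ∧ p.2 ∉ S ∧ E p.1 p.2}.ncard : ℤ) :=
  ⟨fun ⟨_, hOE, _, hbal⟩ => sub_le_ncard_cut_of_balanced hEsymm hOE hbal,
    exists_balanced_orientation_of_cut_condition hEsymm hEirr heul⟩

/-- Let `H` be a mixed graph (undirected edge relation `E`, symmetric and loopless; arc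
relation `A`, loopless) whose underlying graph is eulerian (every vertex has even total
degree). Then `H` has an eulerian orientation — an orientation `O` of its undirected edges
such that every vertex has equal in- and out-degree counting arcs and oriented edges — if and
only if for every vertex set `S`, `d⁺(S) - d⁻(S)` is at most the number of undirected edges
leaving `S`. -/
theorem stmt_11 {V : Type*} [Fintype V]
    (E : V → V → Prop) (hEsymm : ∀ u v, E u v → E v u) (hEirr : ∀ v, ¬ E v v)
    (A : V → V → Prop) (hAirr : ∀ v, ¬ A v v)
    (heul : ∀ v : V, Even ({w | E v w}.ncard + {w | A v w}.ncard + {w | A w v}.ncard)) :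
    (∃ O : V → V → Prop, (∀ u v, O u v → E u v) ∧ (∀ u v, E u v → (O u v ↔ ¬ O v u)) ∧
        ∀ v : V, {w | A v w}.ncard + {w | O v w}.ncard
          = {w | A w v}.ncard + {w | O w v}.ncard)
    ↔ ∀ S : Set V,
        ({p : V × V | p.1 ∈ S ∧ p.2 ∉ S ∧ A p.1 p.2}.ncard : ℤ)
          - ({p : V × V | p.1 ∈ S ∧ p.2 ∉ S ∧ A p.2 p.1}.ncard : ℤ)
          ≤ ({p : V × V | p.1 ∈ S ∧ p.2 ∉ S ∧ E p.1 p.2}.ncard : ℤ) :=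
  stmt_11_general E hEsymm hEirr A heul
end

section
/- Let T be a tournament on 2k+1 vertices and let X be a set of at most (2/3)k vertices such that each x ∈ X satisfies d^+(x) = d^-(x) = k. Then there exists a k-arc-strong tournament T' on the same vertex set such that every edge with at least one endpoint in X has the same orientation in T and T'. -/
/-!
A tournament on `2k + 1` vertices whose out-degrees all equal `k` is `k`-arc-strong: a set `S`
with `1 ≤ s ≤ 2k` vertices spans `s(s-1)/2` arcs, so `ks - s(s-1)/2 ≥ k` arcs leave it. It
therefore suffices to reorient the arcs of `T - X` so that every out-degree becomes `k`.

Measure the distance from regularity by `∑ |d⁺(v) - k|`. If some vertex has excess out-degree,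
some vertex `v` has a deficit, and reversing a path of `T - X` from a vertex of excess to `v`
lowers the measure by two. Such a path exists: otherwise let `R` be the vertices that vertices of
excess reach in `T - X`, and `Q` the other vertices outside `X`. All arcs between `Q` and `R`
point into `R`, and counting the arcs spanned by `R` and by `Q` gives `|R| < |X|` and then
`2k < 3|X|`.
-/

open Finset
open scoped Classical

variable {V : Type*} {D : V → V → Prop}

lemma outDeg_eq_card [Fintype V] (D : V → V → Prop) (v : V) : outDeg D v = #{w | D v w} := by
  rw [outDeg, ← Set.ncard_coe_finset]; simp

lemma outDeg_eq_card_add_card_compl [Fintype V] (D : V → V → Prop) (v : V) (S : Finset V) :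
    outDeg D v = #{w ∈ S | D v w} + #{w ∈ Sᶜ | D v w} := by
  simp only [outDeg_eq_card, card_filter, sum_add_sum_compl]

lemma outCut_coe [Fintype V] (D : V → V → Prop) (S : Finset V) :
    outCut D S = ∑ v ∈ S, #{w ∈ Sᶜ | D v w} := by
  have : {p : V × V | p.1 ∈ (S : Set V) ∧ p.2 ∉ (S : Set V) ∧ D p.1 p.2} =
      ↑{p ∈ S ×ˢ Sᶜ | D p.1 p.2} := by
    ext p; simp [and_assoc]
  rw [outCut, this, Set.ncard_coe_finset, card_filter, sum_product]
  simp only [card_filter]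

namespace IsTournament

lemma ne_of_adj (hD : IsTournament D) {u w : V} (h : D u w) : u ≠ w :=
  fun huw => hD.1 u (huw ▸ h)

lemma not_adj_of_adj (hD : IsTournament D) {u w : V} (h : D u w) : ¬ D w u :=
  (hD.2 u w (hD.ne_of_adj h)).mp h

lemma ite_add_ite (hD : IsTournament D) (v w : V) :
    ((if D v w then 1 else 0) + if D w v then 1 else 0 : ℕ) = if v = w then 0 else 1 := by
  by_cases hvw : v = w
  · simp [hvw, hD.1 w]
  by_cases h : D v w
  · simp [h, hvw, hD.not_adj_of_adj h]
  · simp [h, hvw, (hD.2 w v (Ne.symm hvw)).mpr h]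

lemma two_mul_sum_card_filter (hD : IsTournament D) (S : Finset V) :
    2 * ∑ v ∈ S, #{w ∈ S | D v w} = #S * (#S - 1) := by
  simp only [card_filter]
  calc 2 * ∑ v ∈ S, ∑ w ∈ S, (if D v w then 1 else 0)
      = ∑ v ∈ S, ∑ w ∈ S, ((if D v w then 1 else 0) + if D w v then 1 else 0) := by
        rw [two_mul]; nth_rewrite 2 [sum_comm]; simp only [← sum_add_distrib]
    _ = ∑ v ∈ S, (#S - 1) := by
        refine sum_congr rfl fun v hv => ?_
        simp [hD.ite_add_ite, sum_ite, filter_ne, hv]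
    _ = #S * (#S - 1) := by rw [sum_const, smul_eq_mul]

variable [Fintype V]

lemma two_mul_sum_outDeg (hD : IsTournament D) (S : Finset V) :
    2 * ∑ v ∈ S, outDeg D v = #S * (#S - 1) + 2 * ∑ v ∈ S, #{w ∈ Sᶜ | D v w} := by
  simp only [outDeg_eq_card_add_card_compl D _ S, sum_add_distrib, mul_add,
    hD.two_mul_sum_card_filter]

lemma two_mul_sum_outDeg_univ (hD : IsTournament D) :
    2 * ∑ v, outDeg D v = Fintype.card V * (Fintype.card V - 1) := by
  simpa using hD.two_mul_sum_outDeg univ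

lemma kArcStrong_of_outDeg_eq (hD : IsTournament D) {k : ℕ} (hcard : Fintype.card V = 2 * k + 1)
    (hdeg : ∀ v, outDeg D v = k) : kArcStrong D k := by
  intro S hS hSuniv
  have hcut := hD.two_mul_sum_outDeg S.toFinset
  rw [← outCut_coe, Set.coe_toFinset, sum_congr rfl fun v _ => hdeg v, sum_const,
    smul_eq_mul] at hcut
  obtain ⟨s, hs⟩ : ∃ s, #S.toFinset = s + 1 :=
    Nat.exists_eq_add_one.mpr (card_pos.mpr (Set.toFinset_nonempty.mpr hS))
  have hs_lt : s + 1 < 2 * k + 1 := by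
    obtain ⟨a, ha⟩ := (Set.ne_univ_iff_exists_notMem S).mp hSuniv
    rw [← hs, ← hcard]
    exact card_lt_univ_of_notMem (by simpa using ha)
  rw [hs, Nat.add_sub_cancel] at hcut
  nlinarith

lemma exists_outDeg_gt_and_exists_outDeg_lt (hD : IsTournament D) {k : ℕ}
    (hcard : Fintype.card V = 2 * k + 1) {v₀ : V} (hv₀ : outDeg D v₀ ≠ k) :
    (∃ u, k < outDeg D u) ∧ ∃ w, outDeg D w < k := by
  have hsum : ∑ v, outDeg D v = ∑ _v : V, k := by
    have h := hD.two_mul_sum_outDeg_univ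
    rw [hcard, Nat.add_sub_cancel] at h
    rw [sum_const, card_univ, hcard, smul_eq_mul]
    linarith
  constructor
  · by_contra! h
    exact hv₀ ((sum_eq_sum_iff_of_le fun v _ => h v).mp hsum v₀ (mem_univ _))
  · by_contra! h
    exact hv₀ ((sum_eq_sum_iff_of_le fun v _ => h v).mp hsum.symm v₀ (mem_univ _)).symm

lemma lt_three_mul_card_compl_union (hD : IsTournament D) {k : ℕ}
    (hcard : Fintype.card V = 2 * k + 1) {R Q : Finset V} (hRQ : Disjoint R Q)
    (hQR : ∀ z ∈ Q, ∀ y ∈ R, D z y) (hR : k * #R < ∑ y ∈ R, outDeg D y)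
    (hQ : ∑ z ∈ Q, outDeg D z < k * #Q) : 2 * k < 3 * #(R ∪ Q)ᶜ := by
  have hR_out : ∑ y ∈ R, #{w ∈ Rᶜ | D y w} ≤ #R * #(R ∪ Q)ᶜ := by
    refine sum_le_card_nsmul _ _ _ fun y hy => card_le_card fun w hw => ?_
    simp only [mem_filter, mem_compl, mem_union, not_or] at hw ⊢
    exact ⟨hw.1, fun hwQ => hD.not_adj_of_adj (hQR w hwQ y hy) hw.2⟩
  have hQ_out : #Q * #R ≤ ∑ z ∈ Q, #{w ∈ Qᶜ | D z w} := by
    refine card_nsmul_le_sum _ _ _ fun z hz => card_le_card fun y hy => ?_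
    simp only [mem_filter, mem_compl]
    exact ⟨disjoint_left.mp hRQ hy, hQR z hz y hy⟩
  have hR_sum := hD.two_mul_sum_outDeg R
  have hQ_sum := hD.two_mul_sum_outDeg Q
  have hcards : #R + #Q + #(R ∪ Q)ᶜ = 2 * k + 1 := by
    rw [card_compl, card_union_of_disjoint hRQ, hcard]
    have := card_le_univ (R ∪ Q)
    rw [card_union_of_disjoint hRQ, hcard] at this
    omega
  have hR' : 2 * k < #R - 1 + 2 * #(R ∪ Q)ᶜ := by
    refine Nat.lt_of_mul_lt_mul_left (a := #R) ?_
    rw [mul_add, mul_left_comm]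
    linarith
  have hQ' : #Q - 1 + 2 * #R < 2 * k := by
    refine Nat.lt_of_mul_lt_mul_left (a := #Q) ?_
    rw [mul_add, mul_left_comm, mul_left_comm _ 2 k]
    linarith
  omega

end IsTournament

def reverseArc (D : V → V → Prop) (u w : V) : V → V → Prop :=
  fun a b => (D a b ∧ ¬(a = u ∧ b = w)) ∨ (a = w ∧ b = u)

section ReverseArc

variable {u w : V}

lemma reverseArc_iff_of_ne {a b : V} (h₁ : ¬(a = u ∧ b = w)) (h₂ : ¬(a = w ∧ b = u)) :
    reverseArc D u w a b ↔ D a b := by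
  unfold reverseArc; tauto

lemma IsTournament.reverseArc (hD : IsTournament D) (huw : D u w) :
    IsTournament (reverseArc D u w) := by
  have hne := hD.ne_of_adj huw
  refine ⟨fun v => ?_, fun a b hab => ?_⟩
  · rintro (⟨h, -⟩ | ⟨rfl, rfl⟩)
    exacts [hD.1 v h, hne rfl]
  by_cases hx : (a = u ∧ b = w) ∨ (a = w ∧ b = u)
  · rcases hx with ⟨rfl, rfl⟩ | ⟨rfl, rfl⟩ <;> simp [_root_.reverseArc, hne, hne.symm]
  · rw [reverseArc_iff_of_ne (fun h => hx (.inl h)) (fun h => hx (.inr h)),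
      reverseArc_iff_of_ne (fun h => hx (.inr ⟨h.2, h.1⟩)) (fun h => hx (.inl ⟨h.2, h.1⟩))]
    exact hD.2 a b hab

variable [Fintype V]

lemma outDeg_reverseArc_left (hD : IsTournament D) (huw : D u w) :
    outDeg (reverseArc D u w) u + 1 = outDeg D u := by
  have hne := hD.ne_of_adj huw
  have : ({b | reverseArc D u w u b} : Finset V) = ({b | D u b} : Finset V).erase w := by
    ext b; simp [_root_.reverseArc, hne, and_comm]
  rw [outDeg_eq_card, outDeg_eq_card, this, card_erase_add_one (by simpa using huw)]

lemma outDeg_reverseArc_right (hD : IsTournament D) (huw : D u w) :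
    outDeg (reverseArc D u w) w = outDeg D w + 1 := by
  have hne := hD.ne_of_adj huw
  have : ({b | reverseArc D u w w b} : Finset V) = insert u ({b | D w b} : Finset V) := by
    ext b; by_cases hb : b = u <;> simp [_root_.reverseArc, hne.symm, hb]
  rw [outDeg_eq_card, outDeg_eq_card, this,
    card_insert_of_notMem (by simpa using hD.not_adj_of_adj huw)]

lemma outDeg_reverseArc_of_ne {a : V} (hau : a ≠ u) (haw : a ≠ w) :
    outDeg (reverseArc D u w) a = outDeg D a := by
  simp only [outDeg_eq_card]
  congr 1
  ext b
  simp [reverseArc_iff_of_ne (fun h => hau h.1) (fun h => haw h.1)]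

end ReverseArc

noncomputable def imbalance [Fintype V] (k : ℕ) (D : V → V → Prop) : ℕ :=
  ∑ v, ((outDeg D v : ℤ) - k).natAbs

lemma Finset.sum_add_add_eq_of_eqOn_compl_pair [Fintype V] {u w : V} (hne : u ≠ w) {f g : V → ℕ}
    (h : ∀ a, a ≠ u → a ≠ w → f a = g a) : ∑ a, f a + g u + g w = ∑ a, g a + f u + f w := by
  rw [← sum_add_sum_compl {u, w} f, ← sum_add_sum_compl {u, w} g, sum_pair hne, sum_pair hne,
    sum_congr rfl fun a ha => h a (by simp_all) (by simp_all)]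
  ring

section Imbalance

variable [Fintype V] {u w : V} {k : ℕ}

lemma imbalance_reverseArc_add (hD : IsTournament D) (huw : D u w) :
    imbalance k (reverseArc D u w) + ((outDeg D u : ℤ) - k).natAbs
      + ((outDeg D w : ℤ) - k).natAbs
      = imbalance k D + ((outDeg D u : ℤ) - 1 - k).natAbs + ((outDeg D w : ℤ) + 1 - k).natAbs := by
  have hsum := sum_add_add_eq_of_eqOn_compl_pair (hD.ne_of_adj huw)
    (f := fun v => ((outDeg (reverseArc D u w) v : ℤ) - k).natAbs)
    (g := fun v => ((outDeg D v : ℤ) - k).natAbs)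
    fun a hau haw => by rw [outDeg_reverseArc_of_ne hau haw]
  have hu := outDeg_reverseArc_left hD huw
  have hw := outDeg_reverseArc_right hD huw
  unfold imbalance
  omega

lemma imbalance_reverseArc_of_outDeg_eq (hD : IsTournament D) (huw : D u w)
    (hu : k < outDeg D u) (hw : outDeg D w = k) :
    imbalance k (reverseArc D u w) = imbalance k D := by
  have := imbalance_reverseArc_add (k := k) hD huw
  omega

lemma imbalance_reverseArc_lt (hD : IsTournament D) (huw : D u w)
    (hu : k < outDeg D u) (hw : outDeg D w < k) :
    imbalance k (reverseArc D u w) < imbalance k D := by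
  have := imbalance_reverseArc_add (k := k) hD huw
  omega

end Imbalance

-- Paths carry their length: reversing an arc changes the relation, so the induction that
-- reverses a path arc by arc runs on the length.
def RelPath (r : V → V → Prop) : ℕ → V → V → Prop
  | 0, u, v => u = v
  | n + 1, u, v => ∃ w, r u w ∧ RelPath r n w v

namespace RelPath

variable {r r' : V → V → Prop}

lemma snoc : ∀ {n : ℕ} {u v z : V}, RelPath r n u v → r v z → RelPath r (n + 1) u z
  | 0, _, _, _, rfl, h => ⟨_, h, rfl⟩
  | _ + 1, _, _, _, ⟨w, huw, hwv⟩, h => ⟨w, huw, snoc hwv h⟩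

lemma of_imp {p : V → Prop} (hr : ∀ a b, r a b → p b) :
    ∀ {n : ℕ} {u v : V}, RelPath r n u v → p u → p v
  | 0, _, _, rfl, hu => hu
  | _ + 1, _, _, ⟨_, huw, hwv⟩, _ => of_imp hr hwv (hr _ _ huw)

lemma exists_of_imp_or {u w : V} (h : ∀ a b, r a b → (a = u ∧ b = w) ∨ r' a b) :
    ∀ {n : ℕ} {a v : V}, RelPath r n a v → ∃ m ≤ n, RelPath r' m a v ∨ RelPath r' m w v
  | 0, _, _, hav => ⟨0, le_rfl, .inl hav⟩
  | n + 1, a, _, ⟨b, hab, hbv⟩ => by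
    obtain ⟨m, hm, hbv'⟩ := exists_of_imp_or h hbv
    rcases h a b hab with ⟨-, rfl⟩ | hab'
    · exact ⟨m, by omega, .inr (hbv'.elim id id)⟩
    · rcases hbv' with hbv' | hwv
      · exact ⟨m + 1, by omega, .inl ⟨b, hab', hbv'⟩⟩
      · exact ⟨m, by omega, .inr hwv⟩

end RelPath

def offArc (X : Set V) (D : V → V → Prop) (a b : V) : Prop :=
  a ∉ X ∧ b ∉ X ∧ D a b

def AgreesOn (X : Set V) (D D' : V → V → Prop) : Prop :=
  ∀ a b, (a ∈ X ∨ b ∈ X) → (D a b ↔ D' a b)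

namespace AgreesOn

variable {X : Set V} {D' D'' : V → V → Prop}

lemma trans (h : AgreesOn X D D') (h' : AgreesOn X D' D'') : AgreesOn X D D'' :=
  fun a b hab => (h a b hab).trans (h' a b hab)

lemma reverseArc {u w : V} (hu : u ∉ X) (hw : w ∉ X) : AgreesOn X D (reverseArc D u w) := by
  intro a b hab
  rw [reverseArc_iff_of_ne] <;> rintro ⟨rfl, rfl⟩ <;> tauto

lemma outDeg_eq [Fintype V] (h : AgreesOn X D D') {x : V} (hx : x ∈ X) :
    outDeg D x = outDeg D' x := by
  simp only [outDeg_eq_card, h x _ (.inl hx)]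

end AgreesOn

lemma offArc_reverseArc {X : Set V} {u w : V} (hD : IsTournament D) (huw : D u w) {a b : V}
    (hab : offArc X D a b) : (a = u ∧ b = w) ∨ offArc X (reverseArc D u w) a b := by
  obtain ⟨ha, hb, hab⟩ := hab
  by_cases h : a = u ∧ b = w
  · exact .inl h
  refine .inr ⟨ha, hb, (reverseArc_iff_of_ne h ?_).mpr hab⟩
  rintro ⟨rfl, rfl⟩
  exact hD.not_adj_of_adj huw hab

section Repair

variable [Fintype V] {X : Set V} {k : ℕ}

lemma exists_agreesOn_imbalance_lt_of_relPath :
    ∀ (n : ℕ) {D : V → V → Prop} {u v : V}, IsTournament D → k < outDeg D u → outDeg D v < k →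
      RelPath (offArc X D) n u v →
      ∃ D', IsTournament D' ∧ AgreesOn X D D' ∧ imbalance k D' < imbalance k D := by
  intro n
  induction n using Nat.strong_induction_on with | _ n ih => ?_
  intro D u v hD hu hv hpath
  rcases n with _ | m
  · cases (hpath : u = v); omega
  · obtain ⟨w, ⟨huX, hwX, huw⟩, hwv⟩ := hpath
    rcases lt_trichotomy (outDeg D w) k with hw | hw | hw
    · exact ⟨_, hD.reverseArc huw, .reverseArc huX hwX, imbalance_reverseArc_lt hD huw hu hw⟩
    · -- reversing `(u, w)` moves the excess of `u` to `w` and keeps the imbalance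
      obtain ⟨m', hm', hwv'⟩ : ∃ m' ≤ m, RelPath (offArc X (reverseArc D u w)) m' w v := by
        obtain ⟨m', hm', h⟩ := hwv.exists_of_imp_or fun a b => offArc_reverseArc hD huw
        exact ⟨m', hm', h.elim id id⟩
      have hv' : outDeg (reverseArc D u w) v < k := by
        rw [outDeg_reverseArc_of_ne (by rintro rfl; omega) (by rintro rfl; omega)]; exact hv
      obtain ⟨D', hD', hagree, hlt⟩ := ih m' (by omega) (hD.reverseArc huw)
        (by rw [outDeg_reverseArc_right hD huw]; omega) hv' hwv'
      exact ⟨D', hD', (AgreesOn.reverseArc huX hwX).trans hagree,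
        hlt.trans_eq (imbalance_reverseArc_of_outDeg_eq hD huw hu hw)⟩
    · exact ih m (by omega) hD hw hv hwv

lemma exists_relPath_of_outDeg_ne (hD : IsTournament D) (hcard : Fintype.card V = 2 * k + 1)
    (hX : 3 * X.ncard ≤ 2 * k) (hXdeg : ∀ x ∈ X, outDeg D x = k) {v₀ : V}
    (hv₀ : outDeg D v₀ ≠ k) :
    ∃ n u v, k < outDeg D u ∧ RelPath (offArc X D) n u v ∧ outDeg D v < k := by
  have notMem_X {v : V} (hv : outDeg D v ≠ k) : v ∉ X := fun h => hv (hXdeg v h)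
  obtain ⟨⟨u₀, hu₀⟩, w₀, hw₀⟩ := hD.exists_outDeg_gt_and_exists_outDeg_lt hcard hv₀
  by_contra! hno
  set R : Finset V := {y | ∃ n u, k < outDeg D u ∧ RelPath (offArc X D) n u y}
  set Q : Finset V := {z | z ∉ X ∧ z ∉ R}
  have mem_R {y : V} : y ∈ R ↔ ∃ n u, k < outDeg D u ∧ RelPath (offArc X D) n u y := by
    simp [R]
  have hR_X : ∀ y ∈ R, y ∉ X := by
    intro y hy
    obtain ⟨n, u, hu, hpath⟩ := mem_R.mp hy
    exact hpath.of_imp (fun _ _ h => h.2.1) (notMem_X (by omega))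
  have hR_deg : ∀ y ∈ R, k ≤ outDeg D y := by
    intro y hy
    obtain ⟨n, u, hu, hpath⟩ := mem_R.mp hy
    exact hno n u y hu hpath
  have hQ_deg : ∀ z ∈ Q, outDeg D z ≤ k := by
    intro z hz
    by_contra! h
    exact (mem_filter.mp hz).2.2 (mem_R.mpr ⟨0, z, h, rfl⟩)
  have hw₀Q : w₀ ∈ Q := by
    refine mem_filter.mpr ⟨mem_univ _, notMem_X (by omega), fun h => ?_⟩
    exact absurd (hR_deg w₀ h) (by omega)
  have hQR : ∀ z ∈ Q, ∀ y ∈ R, D z y := by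
    intro z hz y hy
    obtain ⟨-, hzX, hzR⟩ := mem_filter.mp hz
    have hzy : z ≠ y := by rintro rfl; exact hzR hy
    refine (hD.2 z y hzy).mpr fun hyz => hzR ?_
    obtain ⟨n, u, hu, hpath⟩ := mem_R.mp hy
    exact mem_R.mpr ⟨n + 1, u, hu, hpath.snoc ⟨hR_X y hy, hzX, hyz⟩⟩
  have hR_sum : k * #R < ∑ y ∈ R, outDeg D y := by
    simpa [mul_comm] using sum_lt_sum hR_deg ⟨u₀, mem_R.mpr ⟨0, u₀, hu₀, rfl⟩, hu₀⟩
  have hQ_sum : ∑ z ∈ Q, outDeg D z < k * #Q := by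
    simpa [mul_comm] using sum_lt_sum hQ_deg ⟨w₀, hw₀Q, hw₀⟩
  have hRQ : Disjoint R Q := disjoint_left.mpr fun y hy hyQ => (mem_filter.mp hyQ).2.2 hy
  have hcompl : #(R ∪ Q)ᶜ ≤ X.ncard := by
    rw [← Set.ncard_coe_finset]
    refine Set.ncard_le_ncard (fun x hx => ?_)
    simp only [coe_compl, coe_union, Set.mem_compl_iff, Set.mem_union, mem_coe, not_or] at hx
    by_contra hxX
    exact hx.2 (mem_filter.mpr ⟨mem_univ _, hxX, hx.1⟩)
  have := hD.lt_three_mul_card_compl_union hcard hRQ hQR hR_sum hQ_sum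
  omega

lemma exists_agreesOn_outDeg_eq (hcard : Fintype.card V = 2 * k + 1) (hX : 3 * X.ncard ≤ 2 * k)
    {D : V → V → Prop} (hD : IsTournament D) (hXdeg : ∀ x ∈ X, outDeg D x = k) :
    ∃ D', IsTournament D' ∧ AgreesOn X D D' ∧ ∀ v, outDeg D' v = k := by
  induction h : imbalance k D using Nat.strong_induction_on generalizing D with | _ n ih => ?_
  by_cases hreg : ∀ v, outDeg D v = k
  · exact ⟨D, hD, fun _ _ _ => Iff.rfl, hreg⟩
  obtain ⟨v₀, hv₀⟩ := not_forall.mp hreg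
  obtain ⟨m, u, v, hu, hpath, hv⟩ := exists_relPath_of_outDeg_ne hD hcard hX hXdeg hv₀
  obtain ⟨D₁, hD₁, hagree₁, hlt⟩ := exists_agreesOn_imbalance_lt_of_relPath m hD hu hv hpath
  obtain ⟨D', hD', hagree', hreg'⟩ := ih _ (h ▸ hlt) hD₁
    (fun x hx => hagree₁.outDeg_eq hx ▸ hXdeg x hx) rfl
  exact ⟨D', hD', hagree₁.trans hagree', hreg'⟩

end Repair

theorem stmt_12_general (k : ℕ) (T : Fin (2 * k + 1) → Fin (2 * k + 1) → Prop)
    (hT : IsTournament T) (X : Set (Fin (2 * k + 1))) (hX : 3 * X.ncard ≤ 2 * k)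
    (hdeg : ∀ x ∈ X, outDeg T x = k ∧ inDeg T x = k) :
    ∃ T' : Fin (2 * k + 1) → Fin (2 * k + 1) → Prop, IsTournament T' ∧ kArcStrong T' k ∧
      ∀ u v, (u ∈ X ∨ v ∈ X) → (T u v ↔ T' u v) := by
  obtain ⟨T', hT', hagree, hreg⟩ :=
    exists_agreesOn_outDeg_eq (Fintype.card_fin _) hX hT fun x hx => (hdeg x hx).1
  exact ⟨T', hT', hT'.kArcStrong_of_outDeg_eq (Fintype.card_fin _) hreg, hagree⟩

/-- Let `T` be a tournament on `2k+1` vertices and `X` a set of at most `(2/3)k` vertices each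
of in- and out-degree exactly `k`. Then there is a `k`-arc-strong tournament `T'` on the same
vertex set in which every edge with an endpoint in `X` keeps its orientation from `T`. -/
theorem stmt_12 (k : ℕ) (hk : 0 < k) (T : Fin (2 * k + 1) → Fin (2 * k + 1) → Prop)
    (hT : IsTournament T) (X : Set (Fin (2 * k + 1))) (hX : 3 * X.ncard ≤ 2 * k)
    (hdeg : ∀ x ∈ X, outDeg T x = k ∧ inDeg T x = k) :
    ∃ T' : Fin (2 * k + 1) → Fin (2 * k + 1) → Prop, IsTournament T' ∧ kArcStrong T' k ∧
      ∀ u v, (u ∈ X ∨ v ∈ X) → (T u v ↔ T' u v) :=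
  stmt_12_general k T hT X hX hdeg
end

section
/- Let T be a tournament with median order (v_1, v_2, ..., v_n) and let F be a set of vertices not containing v_1. Then the number of vertices reachable from v_1 in T - F is at least n - 2|F|. -/
/-- Number of forward arcs of the tournament `T` on `Fin n` under the ordering obtained by
applying the permutation `σ` to the natural order. -/
noncomputable def forwardArcs {n : ℕ} (T : Fin n → Fin n → Prop) (σ : Equiv.Perm (Fin n)) : ℕ :=
  {p : Fin n × Fin n | p.1 < p.2 ∧ T (σ p.1) (σ p.2)}.ncard

/-- The identity ordering `(0, 1, …, n-1)` is a median order of `T`: it maximizes the number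
of forward arcs among all orderings. -/
def IsMedianOrderId {n : ℕ} (T : Fin n → Fin n → Prop) : Prop :=
  ∀ σ : Equiv.Perm (Fin n), forwardArcs T σ ≤ forwardArcs T (Equiv.refl (Fin n))

open Equiv Set

theorem inter_Iic_eq_union_of_notMem {α : Type*} [LinearOrder α] {B : Set α} {r q : α}
    (hrB : r ∉ B) (hrq : r ≤ q) : B ∩ Iic q = (B ∩ Iio r) ∪ (B ∩ Ioc r q) := by
  rw [← Iio_union_Icc_eq_Iic hrq, ← Ioc_insert_left hrq, inter_union_distrib_left,
    inter_insert_of_notMem hrB]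

section Gaps

variable {α : Type*} [LinearOrder α] [Finite α] [PredOrder α] {R B F : Set α}

theorem ncard_inter_Iic_le_of_gaps (hRB : Disjoint R B) (hbot : ∀ b ∈ B, ∃ r ∈ R, r ≤ b)
    (hgap : ∀ r ∈ R, ∀ q, r ≤ q → (∀ j ∈ Ioc r q, j ∉ R) →
      (B ∩ Ioc r q).ncard ≤ (F ∩ Ioc r q).ncard) (q : α) :
    (B ∩ Iic q).ncard ≤ (F ∩ Iic q).ncard := by
  induction q using WellFoundedLT.induction with | _ q ih => ?_
  by_cases hRq : (R ∩ Iic q).Nonempty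
  swap
  · have : B ∩ Iic q = ∅ := by
      refine eq_empty_of_forall_notMem fun b ⟨hb, hbq⟩ => ?_
      obtain ⟨r, hr, hrb⟩ := hbot b hb
      exact hRq ⟨r, hr, hrb.trans hbq⟩
    simp [this]
  obtain ⟨r, ⟨hr, hrq⟩, hrmax⟩ := (R ∩ Iic q).toFinite.exists_maximal hRq
  have hbelow : (B ∩ Iio r).ncard ≤ (F ∩ Iio r).ncard := by
    by_cases hmin : IsMin r
    · simp [Iio_eq_empty_iff.mpr hmin]
    · rw [← Iic_pred_eq_Iio_of_not_isMin hmin]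
      exact ih _ ((Order.pred_lt_of_not_isMin hmin).trans_le hrq)
  have habove := hgap r hr q hrq fun j hj hjR => hj.1.not_ge (hrmax ⟨hjR, hj.2⟩ hj.1.le)
  have hdisj (S : Set α) : Disjoint (S ∩ Iio r) (S ∩ Ioc r q) :=
    disjoint_left.mpr fun _ h1 h2 => lt_asymm h1.2 h2.2.1
  calc (B ∩ Iic q).ncard = (B ∩ Iio r).ncard + (B ∩ Ioc r q).ncard := by
        rw [inter_Iic_eq_union_of_notMem (hRB.notMem_of_mem_left hr) hrq,
          ncard_union_eq (hdisj B)]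
    _ ≤ (F ∩ Iio r).ncard + (F ∩ Ioc r q).ncard := add_le_add hbelow habove
    _ = ((F ∩ Iio r) ∪ (F ∩ Ioc r q)).ncard := (ncard_union_eq (hdisj F)).symm
    _ ≤ (F ∩ Iic q).ncard := ncard_le_ncard <| union_subset
        (inter_subset_inter_right F (Iio_subset_Iic_self.trans (Iic_subset_Iic.mpr hrq)))
        (inter_subset_inter_right F Ioc_subset_Iic_self)

theorem ncard_le_ncard_of_gaps (hRB : Disjoint R B) (hbot : ∀ b ∈ B, ∃ r ∈ R, r ≤ b)
    (hgap : ∀ r ∈ R, ∀ q, r ≤ q → (∀ j ∈ Ioc r q, j ∉ R) →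
      (B ∩ Ioc r q).ncard ≤ (F ∩ Ioc r q).ncard) :
    B.ncard ≤ F.ncard := by
  rcases B.eq_empty_or_nonempty with rfl | hB
  · simp
  obtain ⟨q, -, hq⟩ := B.toFinite.exists_maximal hB
  calc B.ncard = (B ∩ Iic q).ncard := by
        rw [inter_eq_left.mpr fun b (hb : b ∈ B) => mem_Iic.mpr ((le_total b q).elim id (hq hb))]
    _ ≤ (F ∩ Iic q).ncard := ncard_inter_Iic_le_of_gaps hRB hbot hgap q
    _ ≤ F.ncard := ncard_le_ncard inter_subset_left

end Gaps

namespace Fin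

variable {n : ℕ} {p q i j k x y : Fin n}

theorem cycleIcc_lt_cycleIcc_of_lt_of_ne [NeZero n] (hij : i < j) (hjq : j ≠ q) :
    cycleIcc p q i < cycleIcc p q j := by
  have hsucc : ∀ k : Fin n, k < q → (k + 1 : Fin n).val = k.val + 1 := fun k hk =>
    val_add_one_of_lt' (by omega)
  rcases lt_or_ge j p with hjp | hpj
  · rwa [cycleIcc_of_lt hjp, cycleIcc_of_lt (hij.trans hjp)]
  rcases lt_or_gt_of_ne hjq with hjq | hqj
  · rw [cycleIcc_of_ge_of_lt hpj hjq, lt_def, hsucc j hjq]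
    rcases lt_or_ge i p with hip | hpi
    · rw [cycleIcc_of_lt hip]; omega
    · rw [cycleIcc_of_ge_of_lt hpi (hij.trans hjq), hsucc i (hij.trans hjq)]; omega
  · rw [cycleIcc_of_gt hqj]
    rcases lt_or_ge i p with hip | hpi
    · rwa [cycleIcc_of_lt hip]
    rcases lt_trichotomy i q with hiq | rfl | hqi
    · rw [cycleIcc_of_ge_of_lt hpi hiq, lt_def, hsucc i hiq]; omega
    · rw [cycleIcc_of_last hpi]; exact hpi.trans_lt hqj
    · rwa [cycleIcc_of_gt hqi]

theorem cycleIcc_symm_self [NeZero n] (hpq : p ≤ q) : (cycleIcc p q).symm p = q :=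
  (cycleIcc p q).symm_apply_eq.mpr (cycleIcc_of_last hpq).symm

theorem cycleIcc_symm_of_gt (hk : q < k) : (cycleIcc p q).symm k = k :=
  (cycleIcc p q).symm_apply_eq.mpr (cycleIcc_of_gt hk).symm

theorem cycleIcc_symm_lt_symm_self [NeZero n] (hj : j ∈ Ioc p q) :
    (cycleIcc p q).symm j < (cycleIcc p q).symm p := by
  rw [cycleIcc_symm_self (hj.1.le.trans hj.2)]
  by_contra! h
  rcases h.lt_or_eq with h | h
  · have hfix : cycleIcc p q ((cycleIcc p q).symm j) = (cycleIcc p q).symm j := cycleIcc_of_gt h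
    rw [apply_symm_apply] at hfix
    exact hj.2.not_gt (hfix ▸ h)
  · exact hj.1.ne' <| (cycleIcc p q).symm.injective <|
      h.symm.trans (cycleIcc_symm_self (hj.1.le.trans hj.2)).symm

theorem eq_and_mem_Ioc_of_cycleIcc_symm_lt [NeZero n] (hpq : p ≤ q) (hxy : x < y)
    (h : (cycleIcc p q).symm y < (cycleIcc p q).symm x) : x = p ∧ y ∈ Ioc p q := by
  have hxq : (cycleIcc p q).symm x = q := by
    by_contra hne
    have := cycleIcc_lt_cycleIcc_of_lt_of_ne (p := p) h hne
    rw [apply_symm_apply, apply_symm_apply] at this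
    exact this.not_gt hxy
  obtain rfl : x = p := (cycleIcc p q).symm.injective (hxq.trans (cycleIcc_symm_self hpq).symm)
  refine ⟨rfl, hxy, ?_⟩
  by_contra! hqy
  rw [cycleIcc_symm_of_gt hqy, hxq] at h
  exact h.not_gt hqy

end Fin

section

variable {n : ℕ}

theorem forwardArcs_eq_ncard (T : Fin n → Fin n → Prop) (σ : Perm (Fin n)) :
    forwardArcs T σ = {a : Fin n × Fin n | σ.symm a.1 < σ.symm a.2 ∧ T a.1 a.2}.ncard := by
  rw [forwardArcs, ← ncard_image_of_injective _ (σ.prodCongr σ).injective]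
  congr 1
  ext ⟨x, y⟩
  constructor
  · rintro ⟨⟨a, b⟩, ⟨hab, hT⟩, h⟩
    simp only [prodCongr_apply, Prod.map, Prod.mk.injEq] at h
    obtain ⟨rfl, rfl⟩ := h
    simpa using ⟨hab, hT⟩
  · rintro ⟨hxy, hT⟩
    exact ⟨(σ.symm x, σ.symm y), ⟨hxy, by simpa using hT⟩, by simp⟩

theorem IsMedianOrderId.ncard_in_le_ncard_out {T : Fin n → Fin n → Prop} (hmed : IsMedianOrderId T)
    (p q : Fin n) : {j ∈ Ioc p q | T j p}.ncard ≤ {j ∈ Ioc p q | T p j}.ncard := by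
  rcases lt_or_ge q p with hqp | hpq
  · simp [Ioc_eq_empty_of_le hqp.le]
  have : NeZero n := NeZero.of_pos p.pos
  -- the order that puts `p` at position `q` and shifts the window `(p, q]` one step down
  set σ := Fin.cycleIcc p q
  set X := {a : Fin n × Fin n | σ.symm a.1 < σ.symm a.2 ∧ T a.1 a.2}
  set Y := {a : Fin n × Fin n | a.1 < a.2 ∧ T a.1 a.2}
  have hXY : (X \ Y).ncard ≤ (Y \ X).ncard := by
    rw [← ncard_le_ncard_iff_ncard_sdiff_le_ncard_sdiff, ← forwardArcs_eq_ncard]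
    exact hmed σ
  have hin : (fun j => (j, p)) '' {j ∈ Ioc p q | T j p} ⊆ X \ Y := by
    rintro _ ⟨j, ⟨hj, hT⟩, rfl⟩
    exact ⟨⟨Fin.cycleIcc_symm_lt_symm_self hj, hT⟩, fun h => h.1.not_gt hj.1⟩
  have hout : Y \ X ⊆ (fun j => (p, j)) '' {j ∈ Ioc p q | T p j} := by
    rintro ⟨x, y⟩ ⟨⟨hxy, hT⟩, hX⟩
    have hyx : σ.symm y < σ.symm x :=
      (Ne.lt_or_gt (σ.symm.injective.ne hxy.ne')).resolve_right fun h => hX ⟨h, hT⟩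
    obtain ⟨rfl, hy⟩ := Fin.eq_and_mem_Ioc_of_cycleIcc_symm_lt hpq hxy hyx
    exact ⟨y, ⟨hy, hT⟩, rfl⟩
  calc {j ∈ Ioc p q | T j p}.ncard = ((fun j => (j, p)) '' {j ∈ Ioc p q | T j p}).ncard :=
        (ncard_image_of_injective _ fun _ _ h => (Prod.ext_iff.mp h).1).symm
    _ ≤ (X \ Y).ncard := ncard_le_ncard hin
    _ ≤ (Y \ X).ncard := hXY
    _ ≤ ((fun j => (p, j)) '' {j ∈ Ioc p q | T p j}).ncard := ncard_le_ncard hout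
    _ = {j ∈ Ioc p q | T p j}.ncard := ncard_image_of_injective _ fun _ _ h => (Prod.ext_iff.mp h).2

/-- `R^+_{T-F}(z)`. -/
def reachAvoiding {V : Type*} (T : V → V → Prop) (F : Set V) (z : V) : Set V :=
  {w | w ∉ F ∧ Relation.ReflTransGen (fun a b => T a b ∧ a ∉ F ∧ b ∉ F) z w}

theorem IsTournament.rel_of_notMem_reachAvoiding {V : Type*} {T : V → V → Prop}
    (hT : IsTournament T) {F : Set V} {z r b : V} (hr : r ∈ reachAvoiding T F z)
    (hb : b ∉ reachAvoiding T F z ∪ F) : T b r := by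
  have hbF : b ∉ F := fun h => hb (Or.inr h)
  have hbr : b ≠ r := fun h => hb (Or.inl (h ▸ hr))
  exact (hT.2 b r hbr).mpr fun hrb => hb (Or.inl ⟨hbF, hr.2.tail ⟨hrb, hr.1, hbF⟩⟩)

theorem IsMedianOrderId.ncard_gap_le {T : Fin n → Fin n → Prop} (hT : IsTournament T)
    (hmed : IsMedianOrderId T) {F : Set (Fin n)} {z r q : Fin n} (hr : r ∈ reachAvoiding T F z)
    (hgap : ∀ j ∈ Ioc r q, j ∉ reachAvoiding T F z) :
    ((reachAvoiding T F z ∪ F)ᶜ ∩ Ioc r q).ncard ≤ (F ∩ Ioc r q).ncard :=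
  calc ((reachAvoiding T F z ∪ F)ᶜ ∩ Ioc r q).ncard ≤ {j ∈ Ioc r q | T j r}.ncard :=
        ncard_le_ncard fun j hj => ⟨hj.2, hT.rel_of_notMem_reachAvoiding hr hj.1⟩
    _ ≤ {j ∈ Ioc r q | T r j}.ncard := hmed.ncard_in_le_ncard_out r q
    _ ≤ (F ∩ Ioc r q).ncard := ncard_le_ncard fun j ⟨hj, hrj⟩ => by
        refine ⟨?_, hj⟩
        by_contra hjF
        have hjr := hT.rel_of_notMem_reachAvoiding hr (b := j) fun h => h.elim (hgap j hj) hjF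
        exact (hT.2 j r (ne_of_gt hj.1)).mp hjr hrj

end

/-- If `(v_1, …, v_n)` is a median order of a tournament `T` and `F` is a set of vertices with
`v_1 ∉ F`, then at least `n - 2|F|` vertices are reachable from `v_1` in `T - F`. -/
theorem stmt_13 (n : ℕ) (hn : 0 < n) (T : Fin n → Fin n → Prop) (hT : IsTournament T)
    (hmed : IsMedianOrderId T) (F : Set (Fin n)) (hF : (⟨0, hn⟩ : Fin n) ∉ F) :
    (n : ℤ) - 2 * (F.ncard : ℤ) ≤
      ({w : Fin n | w ∉ F ∧
        Relation.ReflTransGen (fun a b => T a b ∧ a ∉ F ∧ b ∉ F) ⟨0, hn⟩ w}.ncard : ℤ) := by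
  set R := reachAvoiding T F ⟨0, hn⟩
  have hB : ((R ∪ F)ᶜ).ncard ≤ F.ncard :=
    ncard_le_ncard_of_gaps (disjoint_compl_right_iff_subset.mpr subset_union_left)
      (fun b _ => ⟨_, ⟨hF, .refl⟩, Fin.le_def.mpr b.val.zero_le⟩)
      (fun _ hr _ _ hgap => hmed.ncard_gap_le hT hr hgap)
  have hRF : (R ∪ F).ncard = R.ncard + F.ncard :=
    ncard_union_eq (disjoint_left.mpr fun _ hw => hw.1)
  have hpartition : (R ∪ F).ncard + ((R ∪ F)ᶜ).ncard = n := by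
    rw [ncard_add_ncard_compl, Nat.card_eq_fintype_card, Fintype.card_fin]
  change (n : ℤ) - 2 * F.ncard ≤ R.ncard
  omega
end

section
/- In any median order (v_1,...,v_n) of a tournament T, for all indices 1 ≤ i < j ≤ n, the vertex v_i dominates (is an in-neighbour of) at least half of the vertices v_{i+1},...,v_j; in particular v_i v_{i+1} is an arc of T for each i < n. -/
/-! Moving `v_i` to just behind `v_j` reverses exactly the pairs `{v_i, v_m}` with `i < m ≤ j`:
the arcs from `v_i` to these vertices stop being forward, the arcs into `v_i` become forward.
Maximality of a median order therefore gives `v_i` at least as many out-neighbours as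
in-neighbours among `v_{i+1}, …, v_j`, and since `T` is a tournament these are all `j - i`
vertices. For `j = i + 1` this forces the arc `v_i v_{i+1}`. -/

theorem IsTournament.ncard_sep_out_add_ncard_sep_in {V : Type*} {D : V → V → Prop}
    (hD : IsTournament D) {s : Set V} (hs : s.Finite) {v : V} (hv : v ∉ s) :
    {m ∈ s | D v m}.ncard + {m ∈ s | D m v}.ncard = s.ncard := by
  have hD' : ∀ m ∈ s, D m v ↔ ¬ D v m := fun m hm => hD.2 m v (ne_of_mem_of_not_mem hm hv)
  rw [← Set.ncard_union_eq (hs := hs.sep _) (ht := hs.sep _)]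
  · congr 1
    ext m
    by_cases hm : m ∈ s <;> simp [hm, hD' m, em]
  · exact Set.disjoint_left.2 fun m ⟨hm, hvm⟩ ⟨_, hmv⟩ => (hD' m hm).1 hmv hvm

namespace Fin

variable {n : ℕ} {i j : Fin n}

theorem val_cycleIcc (hij : i ≤ j) (k : Fin n) :
    (cycleIcc i j k : ℕ) =
      if i ≤ k ∧ k < j then (k : ℕ) + 1 else if k = j then (i : ℕ) else k := by
  have : NeZero n := ⟨i.pos.ne'⟩
  rcases lt_or_ge k i with hki | hik
  · simp [cycleIcc_of_lt hki, hki.not_ge, (hki.trans_le hij).ne]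
  rcases lt_trichotomy k j with hkj | rfl | hjk
  · simp [cycleIcc_of_ge_of_lt hik hkj, hik, hkj, val_add_one_of_lt' (by omega : (k : ℕ) + 1 < n)]
  · simp [cycleIcc_of_last hij]
  · simp [cycleIcc_of_gt hjk, hjk.not_gt, hjk.ne']

/-- `a` precedes `b` once `i` is moved to just behind `j` in the natural order of `Fin n`. -/
def MovedLT (i j a b : Fin n) : Prop :=
  (a < b ∧ ¬(a = i ∧ b ≤ j)) ∨ (b = i ∧ i < a ∧ a ≤ j)

theorem lt_iff_movedLT_cycleIcc (hij : i ≤ j) (p q : Fin n) :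
    p < q ↔ MovedLT i j (cycleIcc i j p) (cycleIcc i j q) := by
  simp only [MovedLT, Fin.lt_def, Fin.le_def, Fin.ext_iff, val_cycleIcc hij]
  split_ifs <;> omega

end Fin

variable {n : ℕ} (T : Fin n → Fin n → Prop)

theorem forwardArcs_eq_ncard_of_lt_iff {R : Fin n → Fin n → Prop} {σ : Equiv.Perm (Fin n)}
    (hR : ∀ p q, p < q ↔ R (σ p) (σ q)) :
    forwardArcs T σ = {q : Fin n × Fin n | R q.1 q.2 ∧ T q.1 q.2}.ncard := by
  rw [forwardArcs, ← Set.ncard_preimage_of_injective_subset_range (s := {q | R q.1 q.2 ∧ T q.1 q.2})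
    (σ.injective.prodMap σ.injective) (fun q _ => (σ.surjective.prodMap σ.surjective) q)]
  congr 1
  ext p
  exact and_congr_left' (hR p.1 p.2)

theorem forwardArcs_cycleIcc_add_ncard {i j : Fin n} (hij : i ≤ j) :
    forwardArcs T (Fin.cycleIcc i j) + {m | i < m ∧ m ≤ j ∧ T i m}.ncard =
      forwardArcs T (Equiv.refl _) + {m | i < m ∧ m ≤ j ∧ T m i}.ncard := by
  rw [forwardArcs_eq_ncard_of_lt_iff T (Fin.lt_iff_movedLT_cycleIcc hij),
    forwardArcs_eq_ncard_of_lt_iff T (R := (· < ·)) fun _ _ => Iff.rfl,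
    ← Set.ncard_image_of_injective {m | i < m ∧ m ≤ j ∧ T i m} (Prod.mk_right_injective i),
    ← Set.ncard_image_of_injective {m | i < m ∧ m ≤ j ∧ T m i} (Prod.mk_left_injective i),
    ← Set.ncard_union_eq, ← Set.ncard_union_eq]
  · congr 1
    ext ⟨a, b⟩
    simp only [Fin.MovedLT, Set.mem_union, Set.mem_ofPred_eq, Set.mem_image, Prod.mk.injEq]
    grind
  · exact Set.disjoint_left.2 fun q hq ⟨m, hm, hqm⟩ => by grind
  · exact Set.disjoint_left.2 fun q hq ⟨m, hm, hqm⟩ => by grind [Fin.MovedLT]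

variable {T}

theorem IsMedianOrderId.sub_le_two_mul_ncard_out (hT : IsTournament T) (hmed : IsMedianOrderId T)
    {i j : Fin n} (hij : i < j) :
    (j : ℕ) - (i : ℕ) ≤ 2 * {m : Fin n | i < m ∧ m ≤ j ∧ T i m}.ncard := by
  have hmove := forwardArcs_cycleIcc_add_ncard T hij.le
  have hsplit := hT.ncard_sep_out_add_ncard_sep_in (Set.finite_Ioc i j) Set.left_notMem_Ioc
  simp only [Set.mem_Ioc, and_assoc] at hsplit
  rw [← Finset.coe_Ioc, Set.ncard_coe_finset, Fin.card_Ioc] at hsplit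
  have hmax := hmed (Fin.cycleIcc i j)
  omega

/-- In any median order `(v_1, …, v_n)` of a tournament `T`, for all `i < j` the vertex `v_i`
dominates at least half of the vertices `v_{i+1}, …, v_j`; in particular `v_i v_{i+1}` is an
arc of `T` for each `i < n`. -/
theorem stmt_14 (n : ℕ) (T : Fin n → Fin n → Prop) (hT : IsTournament T)
    (hmed : IsMedianOrderId T) :
    (∀ i j : Fin n, i < j →
      (j : ℕ) - (i : ℕ) ≤ 2 * {m : Fin n | i < m ∧ m ≤ j ∧ T i m}.ncard) ∧
    (∀ i : Fin n, ∀ h : (i : ℕ) + 1 < n, T i ⟨(i : ℕ) + 1, h⟩) := by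
  refine ⟨fun i j => hmed.sub_le_two_mul_ncard_out hT, fun i h => ?_⟩
  set j : Fin n := ⟨(i : ℕ) + 1, h⟩
  have hout := hmed.sub_le_two_mul_ncard_out hT (Fin.lt_def.2 (Nat.lt_succ_self _) : i < j)
  have hj : (j : ℕ) = i + 1 := rfl
  have hpos : {m | i < m ∧ m ≤ j ∧ T i m}.ncard ≠ 0 := by omega
  obtain ⟨m, him, hmj, hTm⟩ := Set.nonempty_of_ncard_ne_zero hpos
  obtain rfl : m = j := Fin.ext <| Nat.le_antisymm hmj him
  exact hTm
end

section
/- There exists a tournament T of order 5k-3 that cannot be made k-strong by a single inversion: explicitly, if V(T) partitions into A, B, C where T⟨A⟩ and T⟨C⟩ are eulerian tournaments of order 2k-1, |B| = k-1, and A ⇒ B∪C and B ⇒ C, then for every vertex set X, Inv(T;X) is not k-strong. -/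
/-- `D` is `k`-strong. -/
def kStrong {V : Type*} [Fintype V] (D : V → V → Prop) (k : ℕ) : Prop :=
  k + 1 ≤ Fintype.card V ∧
  ∀ X : Set V, X.ncard ≤ k - 1 → ∀ u ∉ X, ∀ v ∉ X,
    Relation.ReflTransGen (fun a b => D a b ∧ a ∉ X ∧ b ∉ X) u v

section Tournament

variable {V : Type*} {T : V → V → Prop}

theorem IsTournament.asymm (hT : IsTournament T) {u v : V} (h : T u v) : ¬ T v u := by
  by_cases huv : u = v
  · subst huv; exact hT.1 u
  · exact (hT.2 u v huv).mp h

theorem IsTournament.comap {W : Type*} {T : W → W → Prop} (hT : IsTournament T) {f : V → W}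
    (hf : f.Injective) : IsTournament (fun u v => T (f u) (f v)) :=
  ⟨fun v => hT.1 (f v), fun _ _ huv => hT.2 _ _ (hf.ne huv)⟩

theorem isTournament_lt {α : Type*} [LinearOrder α] : IsTournament (fun a b : α => a < b) :=
  ⟨lt_irrefl, fun _ _ huv => ⟨fun h => h.not_gt, fun h => (le_of_not_gt h).lt_of_ne huv⟩⟩

theorem IsTournament.sumLex {W : Type*} {T' : W → W → Prop} (hT : IsTournament T)
    (hT' : IsTournament T') : IsTournament (Sum.Lex T T') := by
  refine ⟨?_, ?_⟩
  · rintro (u | u)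
    · simpa using hT.1 u
    · simpa using hT'.1 u
  · rintro (u | u) (v | v) huv
    · simpa using hT.2 u v (by simpa using huv)
    · simp
    · simp
    · simpa using hT'.2 u v (by simpa using huv)

end Tournament

section Inversion

variable {V : Type*} {T : V → V → Prop} {X : Set V} {u v : V}

theorem dinv_of_notMem_left (hu : u ∉ X) : dinv T X u v ↔ T u v := by
  simp [dinv, hu]

theorem dinv_of_notMem_right (hv : v ∉ X) : dinv T X u v ↔ T u v := by
  simp [dinv, hv]

theorem dinv_of_mem (hu : u ∈ X) (hv : v ∈ X) : dinv T X u v ↔ T v u := by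
  simp [dinv, hu, hv]

theorem dinv_self : dinv T X u u ↔ T u u := by
  by_cases hu : u ∈ X
  · exact dinv_of_mem hu hu
  · exact dinv_of_notMem_left hu

end Inversion

section Connectivity

variable {V : Type*} [Fintype V] {D : V → V → Prop} {k : ℕ}

theorem not_kStrong_of_closed (N S : Set V) (hN : N.ncard < k)
    (hS : ∀ a b, a ∈ S → a ∉ N → b ∉ N → D a b → b ∈ S) {u v : V}
    (hu : u ∈ S) (huN : u ∉ N) (hv : v ∉ S) (hvN : v ∉ N) : ¬ kStrong D k := by
  rintro ⟨-, hconn⟩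
  suffices ∀ w, Relation.ReflTransGen (fun a b => D a b ∧ a ∉ N ∧ b ∉ N) u w → w ∈ S from
    hv (this v (hconn N (by omega) u huN v hvN))
  intro w hw
  induction hw with
  | refl => exact hu
  | tail _ hstep ih => exact hS _ _ ih hstep.2.1 hstep.2.2 hstep.1

theorem kStrong.le_ncard_inNbhd (h : kStrong D k) {u : V} (hu : ¬ D u u) :
    k ≤ {w | D w u}.ncard := by
  by_contra! hlt
  obtain ⟨v, hv⟩ : ∃ v, v ∉ insert u {w | D w u} := by
    by_contra! hall
    have hcard := Set.ncard_insert_le u {w | D w u}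
    rw [Set.eq_univ_of_forall hall, Set.ncard_univ, Nat.card_eq_fintype_card] at hcard
    have := h.1
    omega
  rw [Set.mem_insert_iff, not_or] at hv
  refine not_kStrong_of_closed {w | D w u} {u}ᶜ hlt ?_ hv.1 hv.2 (not_not.mpr rfl) hu h
  rintro a b - haN - hab rfl
  exact haN hab

theorem kStrong.flip (h : kStrong D k) : kStrong (flip D) k :=
  ⟨h.1, fun X hX u hu v hv => by
    refine Relation.ReflTransGen.mono ?_ _ _ (Relation.reflTransGen_swap.mpr (h.2 X hX v hv u hu))
    rintro a b ⟨hab, hb, ha⟩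
    exact ⟨hab, ha, hb⟩⟩

theorem kStrong.le_ncard_outNbhd (h : kStrong D k) {u : V} (hu : ¬ D u u) :
    k ≤ {w | D u w}.ncard :=
  h.flip.le_ncard_inNbhd hu

end Connectivity

section InvertedConnectivity

variable {V : Type*} [Fintype V] {T : V → V → Prop} {X : Set V} {k : ℕ} {u : V}

theorem kStrong.le_ncard_inNbhd_of_notMem (h : kStrong (dinv T X) k) (hu : u ∉ X)
    (hirr : ¬ T u u) : k ≤ {w | T w u}.ncard := by
  simpa only [dinv_of_notMem_right hu] using h.le_ncard_inNbhd (dinv_self.not.mpr hirr)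

theorem kStrong.le_ncard_outNbhd_of_notMem (h : kStrong (dinv T X) k) (hu : u ∉ X)
    (hirr : ¬ T u u) : k ≤ {w | T u w}.ncard := by
  simpa only [dinv_of_notMem_left hu] using h.le_ncard_outNbhd (dinv_self.not.mpr hirr)

theorem not_kStrong_dinv_of_outClosed {C : Set V} (hX : Xᶜ.ncard < k)
    (hC : ∀ c ∈ C, ∀ w, T c w → w ∈ C) {u v : V} (hu : u ∈ X \ C) (hv : v ∈ X ∩ C) :
    ¬ kStrong (dinv T X) k := by
  refine not_kStrong_of_closed Xᶜ (X \ C) hX ?_ hu (not_not.mpr hu.1) (fun h => h.2 hv.2)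
    (not_not.mpr hv.1)
  rintro x y ⟨hxX, hxC⟩ - hyN hxy
  have hyX : y ∈ X := not_not.mp hyN
  exact ⟨hyX, fun hyC => hxC (hC y hyC x ((dinv_of_mem hxX hyX).mp hxy))⟩

end InvertedConnectivity

theorem IsTournament.not_kStrong_dinv {V : Type*} [Fintype V] {T : V → V → Prop}
    {A B C : Set V} {k : ℕ} (hT : IsTournament T) (hcover : A ∪ B ∪ C = Set.univ)
    (hAC : Disjoint A C) (hB : B.ncard < k)
    (hAdeg : ∀ a ∈ A, {w ∈ A | T w a}.ncard < k) (hCdeg : ∀ c ∈ C, {w ∈ C | T c w}.ncard < k)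
    (hAto : ∀ a ∈ A, ∀ x ∈ B ∪ C, T a x) (hBC : ∀ b ∈ B, ∀ c ∈ C, T b c)
    (hA : A.Nonempty) (hC : C.Nonempty) (X : Set V) : ¬ kStrong (dinv T X) k := by
  have hmem (x : V) : x ∈ A ∨ x ∈ B ∨ x ∈ C := by
    have : x ∈ A ∪ B ∪ C := hcover ▸ Set.mem_univ x
    simpa only [Set.mem_union, or_assoc] using this
  have hAin : ∀ a ∈ A, ∀ w, T w a → w ∈ A := by
    intro a ha w hwa
    by_contra hw
    exact hT.asymm (hAto a ha w ((hmem w).resolve_left hw)) hwa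
  have hCout : ∀ c ∈ C, ∀ w, T c w → w ∈ C := by
    intro c hc w hcw
    by_contra hw
    refine hT.asymm ?_ hcw
    rcases hmem w with hwA | hwB | hwC
    · exact hAto w hwA c (Or.inr hc)
    · exact hBC w hwB c hc
    · exact absurd hwC hw
  intro hk
  by_cases hAX : ∃ a ∈ A, a ∉ X
  · obtain ⟨a, ha, haX⟩ := hAX
    have hsub : {w | T w a} ⊆ {w ∈ A | T w a} := fun w hwa => ⟨hAin a ha w hwa, hwa⟩
    exact (hAdeg a ha).not_ge
      ((hk.le_ncard_inNbhd_of_notMem haX (hT.1 a)).trans (Set.ncard_le_ncard hsub))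
  by_cases hCX : ∃ c ∈ C, c ∉ X
  · obtain ⟨c, hc, hcX⟩ := hCX
    have hsub : {w | T c w} ⊆ {w ∈ C | T c w} := fun w hcw => ⟨hCout c hc w hcw, hcw⟩
    exact (hCdeg c hc).not_ge
      ((hk.le_ncard_outNbhd_of_notMem hcX (hT.1 c)).trans (Set.ncard_le_ncard hsub))
  push Not at hAX hCX
  obtain ⟨a, ha⟩ := hA
  obtain ⟨c, hc⟩ := hC
  have hXc : Xᶜ ⊆ B := fun x hx =>
    ((hmem x).resolve_left (fun h => hx (hAX x h))).resolve_right (fun h => hx (hCX x h))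
  exact not_kStrong_dinv_of_outClosed ((Set.ncard_le_ncard hXc).trans_lt hB) hCout
    ⟨hAX a ha, hAC.notMem_of_mem_left ha⟩ ⟨hCX c hc, hc⟩ hk

def rotational (m : ℕ) (a b : ZMod (2 * m + 1)) : Prop := (b - a).val ∈ Finset.Icc 1 m

theorem isTournament_rotational (m : ℕ) : IsTournament (rotational m) := by
  refine ⟨fun v => by simp [rotational], fun u v huv => ?_⟩
  have hne : v - u ≠ 0 := sub_ne_zero.mpr huv.symm
  have hpos : (v - u).val ≠ 0 := (ZMod.val_ne_zero _).mpr hne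
  have hneg : (u - v).val = 2 * m + 1 - (v - u).val := by
    have : NeZero (v - u) := ⟨hne⟩
    rw [← neg_sub, ZMod.val_neg_of_ne_zero]
  have hlt := ZMod.val_lt (v - u)
  simp only [rotational, Finset.mem_Icc, hneg]
  omega

theorem ncard_setOf_val_mem_Icc (m : ℕ) :
    {d : ZMod (2 * m + 1) | d.val ∈ Finset.Icc 1 m}.ncard = m := by
  rw [show {d : ZMod (2 * m + 1) | d.val ∈ Finset.Icc 1 m} = ZMod.val ⁻¹' ↑(Finset.Icc 1 m)
      from rfl, Set.ncard_preimage_of_injective_subset_range (ZMod.val_injective _),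
    Set.ncard_coe_finset, Nat.card_Icc, Nat.add_sub_cancel]
  intro n hn
  simp only [Finset.coe_Icc, Set.mem_Icc] at hn
  exact ⟨n, ZMod.val_cast_of_lt (by omega)⟩

theorem ncard_rotational_out (m : ℕ) (a : ZMod (2 * m + 1)) : {b | rotational m a b}.ncard = m :=
  (Set.ncard_preimage_of_injective_subset_range (Equiv.subRight a).injective (by simp)).trans
    (ncard_setOf_val_mem_Icc m)

theorem ncard_rotational_in (m : ℕ) (a : ZMod (2 * m + 1)) : {b | rotational m b a}.ncard = m :=
  (Set.ncard_preimage_of_injective_subset_range (Equiv.subLeft a).injective (by simp)).trans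
    (ncard_setOf_val_mem_Icc m)

theorem ncard_sep_range {α β : Type*} {f : α → β} (hf : f.Injective) (P : β → Prop) :
    {y ∈ Set.range f | P y}.ncard = {x | P (f x)}.ncard := by
  rw [← Set.ncard_preimage_of_injective_subset_range hf (Set.sep_subset _ _)]
  simp

abbrev Blocks (m : ℕ) := (ZMod (2 * m + 1) ⊕ Fin m) ⊕ ZMod (2 * m + 1)

namespace Blocks

variable (m : ℕ)

def A : Set (Blocks m) := Set.range (Sum.inl ∘ Sum.inl)
def B : Set (Blocks m) := Set.range (Sum.inl ∘ Sum.inr)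
def C : Set (Blocks m) := Set.range Sum.inr

theorem union : A m ∪ B m ∪ C m = Set.univ := by
  ext ((a | b) | c) <;> simp [A, B, C]

theorem disjoint_A_B : Disjoint (A m) (B m) := by
  simp [A, B, Set.disjoint_left]

theorem disjoint_A_C : Disjoint (A m) (C m) := by
  simp [A, C, Set.disjoint_left]

theorem disjoint_B_C : Disjoint (B m) (C m) := by
  simp [B, C, Set.disjoint_left]

theorem ncard_A : (A m).ncard = 2 * m + 1 := by
  rw [A, Set.ncard_range_of_injective (Sum.inl_injective.comp Sum.inl_injective), Nat.card_zmod]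

theorem ncard_B : (B m).ncard = m := by
  rw [B, Set.ncard_range_of_injective (Sum.inl_injective.comp Sum.inr_injective),
    Nat.card_eq_fintype_card, Fintype.card_fin]

theorem ncard_C : (C m).ncard = 2 * m + 1 := by
  rw [C, Set.ncard_range_of_injective Sum.inr_injective, Nat.card_zmod]

def tournament : Blocks m → Blocks m → Prop :=
  Sum.Lex (Sum.Lex (rotational m) (· < ·)) (rotational m)

theorem isTournament : IsTournament (tournament m) :=
  ((isTournament_rotational m).sumLex isTournament_lt).sumLex (isTournament_rotational m)

theorem eulerian_A : ∀ x ∈ A m,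
    {y ∈ A m | tournament m x y}.ncard = m ∧ {y ∈ A m | tournament m y x}.ncard = m := by
  rintro _ ⟨a, rfl⟩
  rw [A, ncard_sep_range (Sum.inl_injective.comp Sum.inl_injective),
    ncard_sep_range (Sum.inl_injective.comp Sum.inl_injective)]
  simpa [tournament] using ⟨ncard_rotational_out m a, ncard_rotational_in m a⟩

theorem eulerian_C : ∀ x ∈ C m,
    {y ∈ C m | tournament m x y}.ncard = m ∧ {y ∈ C m | tournament m y x}.ncard = m := by
  rintro _ ⟨c, rfl⟩
  rw [C, ncard_sep_range Sum.inr_injective, ncard_sep_range Sum.inr_injective]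
  simpa [tournament] using ⟨ncard_rotational_out m c, ncard_rotational_in m c⟩

theorem A_to_B_union_C : ∀ x ∈ A m, ∀ y ∈ B m ∪ C m, tournament m x y := by
  rintro _ ⟨a, rfl⟩ _ (⟨b, rfl⟩ | ⟨c, rfl⟩) <;> simp [tournament]

theorem B_to_C : ∀ x ∈ B m, ∀ y ∈ C m, tournament m x y := by
  rintro _ ⟨b, rfl⟩ _ ⟨c, rfl⟩
  simp [tournament]

end Blocks

/-- There is a tournament `T` of order `5k-3`, with a vertex partition `(A, B, C)` where
`T⟨A⟩` and `T⟨C⟩` are eulerian tournaments of order `2k-1`, `|B| = k-1`, `A ⇒ B ∪ C` and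
`B ⇒ C`, such that no single inversion makes `T` `k`-strong. -/
theorem stmt_17 (k : ℕ) (hk : 0 < k) :
    ∃ (T : Fin (5 * k - 3) → Fin (5 * k - 3) → Prop)
      (A B C : Set (Fin (5 * k - 3))),
      IsTournament T ∧
      A ∪ B ∪ C = Set.univ ∧ Disjoint A B ∧ Disjoint A C ∧ Disjoint B C ∧
      A.ncard = 2 * k - 1 ∧ B.ncard = k - 1 ∧ C.ncard = 2 * k - 1 ∧
      (∀ a ∈ A, {w ∈ A | T a w}.ncard = k - 1 ∧ {w ∈ A | T w a}.ncard = k - 1) ∧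
      (∀ c ∈ C, {w ∈ C | T c w}.ncard = k - 1 ∧ {w ∈ C | T w c}.ncard = k - 1) ∧
      (∀ a ∈ A, ∀ x ∈ B ∪ C, T a x) ∧ (∀ b ∈ B, ∀ c ∈ C, T b c) ∧
      ∀ X : Set (Fin (5 * k - 3)), ¬ kStrong (dinv T X) k := by
  obtain ⟨m, rfl⟩ : ∃ m, k = m + 1 := ⟨k - 1, by omega⟩
  rw [show 2 * (m + 1) - 1 = 2 * m + 1 by omega, Nat.add_sub_cancel]
  have e : Fin (5 * (m + 1) - 3) ≃ Blocks m := Fintype.equivOfCardEq (by simp; omega)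
  have hncard (s : Set (Blocks m)) : (e ⁻¹' s).ncard = s.ncard :=
    Set.ncard_preimage_of_injective_subset_range e.injective (by simp)
  have hT := (Blocks.isTournament m).comap e.injective
  have hcover : e ⁻¹' Blocks.A m ∪ e ⁻¹' Blocks.B m ∪ e ⁻¹' Blocks.C m = Set.univ := by
    rw [← Set.preimage_union, ← Set.preimage_union, Blocks.union, Set.preimage_univ]
  have hAC := (Blocks.disjoint_A_C m).preimage e
  have hA := (hncard _).trans (Blocks.ncard_A m)
  have hB := (hncard _).trans (Blocks.ncard_B m)
  have hC := (hncard _).trans (Blocks.ncard_C m)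
  have hAdeg (a) (ha : a ∈ e ⁻¹' Blocks.A m) :=
    (Blocks.eulerian_A m (e a) ha).imp (hncard _).trans (hncard _).trans
  have hCdeg (c) (hc : c ∈ e ⁻¹' Blocks.C m) :=
    (Blocks.eulerian_C m (e c) hc).imp (hncard _).trans (hncard _).trans
  have hAto (a) (ha : a ∈ e ⁻¹' Blocks.A m) (x) (hx : x ∈ e ⁻¹' Blocks.B m ∪ e ⁻¹' Blocks.C m) :=
    Blocks.A_to_B_union_C m (e a) ha (e x) hx
  have hBto (b) (hb : b ∈ e ⁻¹' Blocks.B m) (c) (hc : c ∈ e ⁻¹' Blocks.C m) :=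
    Blocks.B_to_C m (e b) hb (e c) hc
  refine ⟨_, _, _, _, hT, hcover, (Blocks.disjoint_A_B m).preimage e, hAC,
    (Blocks.disjoint_B_C m).preimage e, hA, hB, hC, hAdeg, hCdeg, hAto, hBto, fun X => ?_⟩
  exact hT.not_kStrong_dinv hcover hAC (hB.trans_lt m.lt_succ_self)
    (fun a ha => (hAdeg a ha).2.trans_lt m.lt_succ_self)
    (fun c hc => (hCdeg c hc).1.trans_lt m.lt_succ_self) hAto hBto
    (Set.nonempty_of_ncard_ne_zero (by omega)) (Set.nonempty_of_ncard_ne_zero (by omega)) X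
end
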